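/- arXiv:1104.2583 — 7 statements merged into one kernel-verified Lean document; each statement's English description precedes it below -/
import Mathlib

section
/- Let φ : [0,1] → ℝ^d be a C¹ curve with φ(t) ≠ 0 for all t, let 0 < ε < ε' < 1, let γ = max over ξ ∈ [0,1] of ‖φ'(ξ)‖₂/‖φ(ξ)‖₂ (assumed finite), and let 𝒩 ∈ ℕ satisfy 𝒩 ≥ (√d + 2)·γ/(ε'-ε). Let M : ℝ^d → ℝ^k be a linear map with ‖M‖ ≤ √(d/k) such that (1-ε)‖φ(T_i)‖₂ ≤ ‖Mφ(T_i)‖₂ ≤ (1+ε)‖φ(T_i)‖₂ holds for each i = 0,…,𝒩-1, where T_i is a point in [i/𝒩, (i+1)/𝒩] maximizing ‖φ'‖₂ on that subinterval. Then (1-ε')‖φ(t)‖₂ ≤ ‖Mφ(t)‖₂ ≤ (1+ε')‖φ(t)‖₂ for all t ∈ [0,1]. -/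
open Set Real

set_option maxHeartbeats 800000

theorem stmt_3 {d k : ℕ} (hk : 0 < k) (hkd : k ≤ d)
    (φ φ' : ℝ → EuclideanSpace ℝ (Fin d))
    (hderiv : ∀ t ∈ Icc (0 : ℝ) 1, HasDerivAt φ (φ' t) t)
    (hcont : ContinuousOn φ' (Icc (0 : ℝ) 1))
    (hφne : ∀ t ∈ Icc (0 : ℝ) 1, φ t ≠ 0)
    (ε ε' γ : ℝ) (hε0 : 0 < ε) (hεε' : ε < ε') (hε'1 : ε' < 1)
    (hγ : ∀ ξ ∈ Icc (0 : ℝ) 1, ‖φ' ξ‖ ≤ γ * ‖φ ξ‖)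
    (𝒩 : ℕ) (h𝒩0 : 0 < 𝒩)
    (h𝒩 : ((Real.sqrt d + 2) * γ / (ε' - ε)) ≤ 𝒩)
    (T : Fin 𝒩 → ℝ)
    (hT : ∀ i : Fin 𝒩, T i ∈ Icc ((i : ℝ) / 𝒩) (((i : ℝ) + 1) / 𝒩) ∧
      ∀ ξ ∈ Icc ((i : ℝ) / 𝒩) (((i : ℝ) + 1) / 𝒩), ‖φ' ξ‖ ≤ ‖φ' (T i)‖)
    (M : EuclideanSpace ℝ (Fin d) →L[ℝ] EuclideanSpace ℝ (Fin k))
    (hM : ‖M‖ ≤ Real.sqrt ((d : ℝ) / k))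
    (hMT : ∀ i : Fin 𝒩,
      (1 - ε) * ‖φ (T i)‖ ≤ ‖M (φ (T i))‖ ∧ ‖M (φ (T i))‖ ≤ (1 + ε) * ‖φ (T i)‖) :
    ∀ t ∈ Icc (0 : ℝ) 1,
      (1 - ε') * ‖φ t‖ ≤ ‖M (φ t)‖ ∧ ‖M (φ t)‖ ≤ (1 + ε') * ‖φ t‖ := by
  intro t ht
  have h𝒩R : (0:ℝ) < 𝒩 := by exact_mod_cast h𝒩0
  have ht0 : (0:ℝ) ≤ t := ht.1
  have ht1 : t ≤ 1 := ht.2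
  -- choose the index
  set i0 : ℕ := min ⌊t * 𝒩⌋₊ (𝒩 - 1) with hi0
  have hi0lt : i0 < 𝒩 := lt_of_le_of_lt (min_le_right _ _) (Nat.sub_lt h𝒩0 one_pos)
  set i : Fin 𝒩 := ⟨i0, hi0lt⟩ with hi
  have hicast : ((i : ℕ) : ℝ) = (i0 : ℝ) := rfl
  -- t is in the i-th subinterval
  have htlow : (i0 : ℝ) ≤ t * 𝒩 := by
    calc (i0 : ℝ) ≤ (⌊t * 𝒩⌋₊ : ℝ) := by exact_mod_cast min_le_left _ _
    _ ≤ t * 𝒩 := Nat.floor_le (by positivity)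
  have hthigh : t * 𝒩 ≤ (i0 : ℝ) + 1 := by
    rcases min_cases ⌊t * 𝒩⌋₊ (𝒩 - 1) with ⟨h, _⟩ | ⟨h, h'⟩
    · rw [hi0, h]
      exact (Nat.lt_floor_add_one _).le
    · rw [hi0, h]
      have : ((𝒩 - 1 : ℕ) : ℝ) + 1 = (𝒩 : ℝ) := by
        have : (1:ℕ) ≤ 𝒩 := h𝒩0
        push_cast [Nat.cast_sub this]
        ring
      rw [this]
      nlinarith
  have hti : t ∈ Icc ((i : ℝ) / 𝒩) (((i : ℝ) + 1) / 𝒩) := by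
    constructor
    · rw [div_le_iff₀ h𝒩R]; exact_mod_cast htlow
    · rw [le_div_iff₀ h𝒩R]; exact_mod_cast hthigh
  -- the subinterval is inside [0,1]
  have hsub : Icc ((i : ℝ) / 𝒩) (((i : ℝ) + 1) / 𝒩) ⊆ Icc (0:ℝ) 1 := by
    apply Icc_subset_Icc
    · positivity
    · rw [div_le_one h𝒩R]
      have : (i0 : ℝ) + 1 ≤ (𝒩 : ℝ) := by exact_mod_cast hi0lt
      exact_mod_cast this
  have hTmem : T i ∈ Icc (0:ℝ) 1 := hsub (hT i).1
  -- mean value inequality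
  have hD : ‖φ t - φ (T i)‖ ≤ ‖φ' (T i)‖ * (1 / 𝒩) := by
    have hconv : Convex ℝ (Icc ((i : ℝ) / 𝒩) (((i : ℝ) + 1) / 𝒩)) := convex_Icc _ _
    have hmv := hconv.norm_image_sub_le_of_norm_hasDerivWithin_le
      (f := φ) (f' := φ') (C := ‖φ' (T i)‖)
      (fun x hx => (hderiv x (hsub hx)).hasDerivWithinAt)
      (fun x hx => (hT i).2 x hx) (hT i).1 hti
    have hdist : ‖t - T i‖ ≤ 1 / 𝒩 := by
      rw [Real.norm_eq_abs, abs_sub_le_iff]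
      obtain ⟨⟨hl, hr⟩, _⟩ := hT i
      obtain ⟨hl', hr'⟩ := hti
      constructor <;> [skip; skip] <;>
        · rw [div_le_iff₀ h𝒩R] at *
          rw [le_div_iff₀ h𝒩R] at *
          nlinarith [hr', hl, hr, hl']
    calc ‖φ t - φ (T i)‖ ≤ ‖φ' (T i)‖ * ‖t - T i‖ := hmv
    _ ≤ ‖φ' (T i)‖ * (1 / 𝒩) := by
        exact mul_le_mul_of_nonneg_left hdist (norm_nonneg _)
  -- notation
  set A := ‖φ (T i)‖ with hA
  set B := ‖φ t‖ with hB
  set P := ‖M (φ t)‖ with hP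
  set Q := ‖M (φ (T i))‖ with hQ
  set D := ‖φ t - φ (T i)‖ with hDdef
  have hApos : 0 < A := norm_pos_iff.mpr (hφne _ hTmem)
  have hDnn : 0 ≤ D := norm_nonneg _
  have hPnn : 0 ≤ P := norm_nonneg _
  have hsd : 0 ≤ Real.sqrt d := Real.sqrt_nonneg _
  have hγA : ‖φ' (T i)‖ ≤ γ * A := hγ _ hTmem
  have hγnn : 0 ≤ γ := by nlinarith [norm_nonneg (φ' (T i))]
  have hND : 𝒩 * D ≤ γ * A := by
    have := hD.trans (by
      apply mul_le_mul_of_nonneg_right hγA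
      positivity)
    rw [mul_one_div] at this
    calc (𝒩:ℝ) * D ≤ 𝒩 * (γ * A / 𝒩) := by
          exact mul_le_mul_of_nonneg_left this h𝒩R.le
    _ = γ * A := by field_simp
  -- operator norm bound
  have hMd : ‖M‖ ≤ Real.sqrt d := by
    refine hM.trans (Real.sqrt_le_sqrt ?_)
    have hk1 : (1:ℝ) ≤ (k:ℝ) := by exact_mod_cast hk
    rw [div_le_iff₀ (by positivity)]
    exact le_mul_of_one_le_right (Nat.cast_nonneg d) hk1
  have hMD : ‖M (φ t) - M (φ (T i))‖ ≤ Real.sqrt d * D := by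
    calc ‖M (φ t) - M (φ (T i))‖ = ‖M (φ t - φ (T i))‖ := by rw [map_sub]
    _ ≤ ‖M‖ * D := M.le_opNorm _
    _ ≤ Real.sqrt d * D := mul_le_mul_of_nonneg_right hMd hDnn
  have h2 : P ≤ Q + Real.sqrt d * D := by
    have := norm_sub_norm_le (M (φ t)) (M (φ (T i)))
    linarith [this.trans hMD]
  have h3 : Q ≤ P + Real.sqrt d * D := by
    have h := norm_sub_norm_le (M (φ (T i))) (M (φ t))
    rw [norm_sub_rev] at h
    linarith [h.trans hMD]
  have h4 : A - D ≤ B := by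
    have h := norm_sub_norm_le (φ (T i)) (φ t)
    rw [norm_sub_rev] at h
    linarith
  have h5 : B ≤ A + D := by
    have h := norm_sub_norm_le (φ t) (φ (T i))
    linarith
  obtain ⟨h6, h7⟩ := hMT i
  rw [← hA, ← hQ] at h6 h7
  -- key numeric inequality
  have hee : 0 < ε' - ε := by linarith
  have h8 : (Real.sqrt d + 2) * γ ≤ 𝒩 * (ε' - ε) := by
    rw [div_le_iff₀ hee] at h𝒩
    linarith
  have hkey : (Real.sqrt d + 2) * D ≤ (ε' - ε) * A := by
    have h9 : (Real.sqrt d + 2) * (𝒩 * D) ≤ (Real.sqrt d + 2) * (γ * A) := by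
      apply mul_le_mul_of_nonneg_left hND (by positivity)
    have h10 : (Real.sqrt d + 2) * γ * A ≤ 𝒩 * (ε' - ε) * A :=
      mul_le_mul_of_nonneg_right h8 hApos.le
    have h11 : (𝒩:ℝ) * ((Real.sqrt d + 2) * D) ≤ 𝒩 * ((ε' - ε) * A) := by
      linarith [h9, h10]
    exact le_of_mul_le_mul_left h11 h𝒩R
  have hu : (0:ℝ) ≤ 1 - ε' := by linarith
  have hv : (0:ℝ) ≤ 1 + ε' := by linarith
  have hw1 : (1 - ε') * B ≤ (1 - ε') * (A + D) := mul_le_mul_of_nonneg_left h5 hu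
  have hw2 : (1 + ε') * (A - D) ≤ (1 + ε') * B := mul_le_mul_of_nonneg_left h4 hv
  have hx1 : 0 ≤ (1 - ε') * D := mul_nonneg hu hDnn
  have hx2 : 0 ≤ ε' * D := mul_nonneg (by linarith) hDnn
  constructor
  · linarith only [hw1, h3, h6, hkey, hDnn, hε0.le, hεε', hx1, hx2]
  · linarith only [hw2, h2, h7, hkey, hDnn, hε0.le, hεε', hx1, hx2]
end

section
/- Consider the Euler discretizations x_i^{n+1} = x_i^n + h[f_i(𝒟x^n) + Σ_j f_{ij}(𝒟x^n)x_j^n] in ℝ^d and y_i^{n+1} = y_i^n + h[M f_i(𝒟'y^n) + Σ_j f_{ij}(𝒟'y^n)y_j^n] in ℝ^k with y_i^0 = M x_i^0, where 𝒟x = (‖x_i - x_j‖₂)_{ij} and 𝒟'y = (‖y_i - y_j‖₂)_{ij}. Suppose: (a) |f_i(a) - f_i(b)| ≤ L·‖a-b‖_∞ entrywise, (b) Σ_j |f_{ij}(a)| ≤ L', (c) Σ_j |f_{ij}(a) - f_{ij}(b)| ≤ L''·‖a-b‖_∞ for all i and all matrices a, b; (d) ‖M f_i(𝒟'y^n) -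 M f_i(𝒟x^n)‖₂ ≤ (1+ε)‖f_i(𝒟'y^n) - f_i(𝒟x^n)‖₂, ‖M x_j^n‖₂ ≤ (1+ε)‖x_j^n‖₂, and (1-ε)‖x_i^n - x_j^n‖₂ ≤ ‖M x_i^n - M x_j^n‖₂ ≤ (1+ε)‖x_i^n - x_j^n‖₂ for all i, j, n; and (e) ‖x_j^n‖₂ ≤ α for all j, n. Then the error ℰ^n = max_i ‖y_i^n - M x_i^n‖₂ satisfies ℰ^n ≤ ε·h·n·B·exp(h·n·A) with A = L' + 2(1+ε)(L + αL'') and B = 2α(1+ε)(L + αL''). -/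
open Real

noncomputable section

/-- The adjacency matrix of a configuration of `N` points. -/
def adjMat {N m : ℕ} (z : Fin N → EuclideanSpace ℝ (Fin m)) : Matrix (Fin N) (Fin N) ℝ :=
  Matrix.of fun i j => ‖z i - z j‖

/-- The maximal absolute entry of a matrix. -/
def matSup {N : ℕ} (A : Matrix (Fin N) (Fin N) ℝ) : ℝ := ⨆ i, ⨆ j, |A i j|

set_option maxHeartbeats 1000000 in
theorem stmt_5 {N d k n₀ : ℕ}
    (f : Fin N → Matrix (Fin N) (Fin N) ℝ → EuclideanSpace ℝ (Fin d))
    (F : Fin N → Fin N → Matrix (Fin N) (Fin N) ℝ → ℝ)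
    (M : EuclideanSpace ℝ (Fin d) →L[ℝ] EuclideanSpace ℝ (Fin k))
    (x : ℕ → Fin N → EuclideanSpace ℝ (Fin d))
    (y : ℕ → Fin N → EuclideanSpace ℝ (Fin k))
    (h ε α L L' L'' : ℝ)
    (hh : 0 < h) (hε : 0 < ε) (hα : 0 < α)
    (hLpos : 0 < L) (hL'pos : 0 < L') (hL''pos : 0 < L'')
    -- Euler schemes
    (hx : ∀ n < n₀, ∀ i, x (n + 1) i =
      x n i + h • (f i (adjMat (x n)) + ∑ j, F i j (adjMat (x n)) • x n j))
    (hy0 : ∀ i, y 0 i = M (x 0 i))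
    (hy : ∀ n < n₀, ∀ i, y (n + 1) i =
      y n i + h • (M (f i (adjMat (y n))) + ∑ j, F i j (adjMat (y n)) • y n j))
    -- (a) Lipschitz continuity of the fᵢ
    (hfLip : ∀ i a b, ‖f i a - f i b‖ ≤ L * matSup (a - b))
    -- (b) boundedness of row sums of the f_{ij}
    (hFbd : ∀ i a, ∑ j, |F i j a| ≤ L')
    -- (c) Lipschitz continuity of row sums of the f_{ij}
    (hFLip : ∀ i a b, ∑ j, |F i j a - F i j b| ≤ L'' * matSup (a - b))
    -- (d) quasi-isometry properties of M along the trajectories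
    (hM1 : ∀ n ≤ n₀, ∀ i, ‖M (f i (adjMat (y n))) - M (f i (adjMat (x n)))‖ ≤
      (1 + ε) * ‖f i (adjMat (y n)) - f i (adjMat (x n))‖)
    (hM2 : ∀ n ≤ n₀, ∀ j, ‖M (x n j)‖ ≤ (1 + ε) * ‖x n j‖)
    (hM3 : ∀ n ≤ n₀, ∀ i j,
      (1 - ε) * ‖x n i - x n j‖ ≤ ‖M (x n i) - M (x n j)‖ ∧
      ‖M (x n i) - M (x n j)‖ ≤ (1 + ε) * ‖x n i - x n j‖)
    -- (e) a priori bound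
    (hbd : ∀ n ≤ n₀, ∀ j, ‖x n j‖ ≤ α) :
    ∀ n ≤ n₀, (⨆ i, ‖y n i - M (x n i)‖) ≤
      ε * h * n * (2 * α * (1 + ε) * (L + α * L'')) *
        Real.exp (h * n * (L' + 2 * (1 + ε) * (L + α * L''))) := by
  set A : ℝ := L' + 2 * (1 + ε) * (L + α * L'') with hAdef
  set B : ℝ := 2 * α * (1 + ε) * (L + α * L'') with hBdef
  have hLa : (0:ℝ) < L + α * L'' := by nlinarith [mul_pos hα hL''pos]
  have hεs : (0:ℝ) < 1 + ε := by linarith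
  have hApos : 0 < A := by rw [hAdef]; nlinarith [mul_pos hεs hLa]
  have hBpos : 0 < B := by
    rw [hBdef]; nlinarith [mul_pos (mul_pos (by linarith : (0:ℝ) < 2 * α) hεs) hLa]
  -- the error at time `m`
  have hEle : ∀ (m : ℕ) (i : Fin N),
      ‖y m i - M (x m i)‖ ≤ ⨆ j, ‖y m j - M (x m j)‖ := fun m i =>
    le_ciSup (Set.Finite.bddAbove (Set.finite_range fun j => ‖y m j - M (x m j)‖)) i
  have hEnn : ∀ m : ℕ, (0:ℝ) ≤ ⨆ j, ‖y m j - M (x m j)‖ := fun m =>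
    Real.iSup_nonneg fun i => norm_nonneg _
  -- one-step estimate
  have key : ∀ m < n₀, (⨆ j, ‖y (m + 1) j - M (x (m + 1) j)‖) ≤
      (1 + h * A) * (⨆ j, ‖y m j - M (x m j)‖) + ε * h * B := by
    intro m hm
    have hm' : m ≤ n₀ := hm.le
    set a : Matrix (Fin N) (Fin N) ℝ := adjMat (y m) with ha
    set b : Matrix (Fin N) (Fin N) ℝ := adjMat (x m) with hb
    -- bound on the sup-distance between adjacency matrices
    have hS : matSup (a - b) ≤ 2 * (⨆ j, ‖y m j - M (x m j)‖) + 2 * ε * α := by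
      have hnn : (0:ℝ) ≤ 2 * (⨆ j, ‖y m j - M (x m j)‖) + 2 * ε * α := by nlinarith [hEnn m]
      refine Real.iSup_le (fun i => Real.iSup_le (fun j => ?_) hnn) hnn
      have hab : (a - b) i j = ‖y m i - y m j‖ - ‖x m i - x m j‖ := by
        simp [ha, hb, adjMat, Matrix.sub_apply]
      rw [hab, abs_le]
      have hxd : ‖x m i - x m j‖ ≤ 2 * α := by
        have := hbd m hm' i
        have := hbd m hm' j
        calc ‖x m i - x m j‖ ≤ ‖x m i‖ + ‖x m j‖ := norm_sub_le _ _
          _ ≤ 2 * α := by linarith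
      have h1 := hEle m i
      have h2 := hEle m j
      have h3 := (hM3 m hm' i j).1
      have h4 := (hM3 m hm' i j).2
      constructor
      · -- ‖x_i - x_j‖ - ‖y_i - y_j‖ ≤ 2 E + 2εα
        have htr : ‖M (x m i) - M (x m j)‖ ≤
            ‖y m i - M (x m i)‖ + ‖y m i - y m j‖ + ‖y m j - M (x m j)‖ := by
          have : M (x m i) - M (x m j) =
              -(y m i - M (x m i)) + (y m i - y m j) + (y m j - M (x m j)) := by abel
          rw [this]
          refine (norm_add_le _ _).trans ?_
          have := norm_add_le (-(y m i - M (x m i))) (y m i - y m j)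
          rw [norm_neg] at this
          linarith
        have hxnn : 0 ≤ ‖x m i - x m j‖ := norm_nonneg _
        nlinarith
      · -- ‖y_i - y_j‖ - ‖x_i - x_j‖ ≤ 2 E + 2εα
        have htr : ‖y m i - y m j‖ ≤
            ‖y m i - M (x m i)‖ + ‖M (x m i) - M (x m j)‖ + ‖y m j - M (x m j)‖ := by
          have : y m i - y m j =
              (y m i - M (x m i)) + (M (x m i) - M (x m j)) + -(y m j - M (x m j)) := by abel
          rw [this]
          refine (norm_add_le _ _).trans ?_
          rw [norm_neg]
          have := norm_add_le (y m i - M (x m i)) (M (x m i) - M (x m j))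
          linarith
        have hxnn : 0 ≤ ‖x m i - x m j‖ := norm_nonneg _
        nlinarith
    have hSnn : 0 ≤ matSup (a - b) :=
      Real.iSup_nonneg fun i => Real.iSup_nonneg fun j => abs_nonneg _
    -- pointwise one-step bound
    have hnnRHS : (0:ℝ) ≤ (1 + h * A) * (⨆ j, ‖y m j - M (x m j)‖) + ε * h * B := by
      have h1 : (0:ℝ) ≤ 1 + h * A := by nlinarith [mul_pos hh hApos]
      have h2 := hEnn m
      have h3 : (0:ℝ) ≤ ε * h * B := by positivity
      nlinarith [mul_nonneg h1 h2]
    refine Real.iSup_le (fun i => ?_) hnnRHS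
    -- algebraic identity for the error increment
    have hsum : (∑ j, F i j a • y m j) - (∑ j, F i j b • M (x m j)) =
        (∑ j, F i j a • (y m j - M (x m j))) + (∑ j, (F i j a - F i j b) • M (x m j)) := by
      rw [← Finset.sum_add_distrib, ← Finset.sum_sub_distrib]
      refine Finset.sum_congr rfl fun j _ => ?_
      rw [smul_sub, sub_smul]; abel
    have hid : y (m + 1) i - M (x (m + 1) i) =
        (y m i - M (x m i)) + h • ((M (f i a) - M (f i b)) +
          ((∑ j, F i j a • (y m j - M (x m j))) + (∑ j, (F i j a - F i j b) • M (x m j)))) := by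
      rw [hy m hm i, hx m hm i, map_add, map_smul, map_add, map_sum]
      simp only [map_smul]
      rw [← hsum]
      simp only [smul_add, smul_sub]
      abel
    -- bound the three pieces
    have hT1 : ‖M (f i a) - M (f i b)‖ ≤ (1 + ε) * L * matSup (a - b) := by
      have h1 := hM1 m hm' i
      have h2 := hfLip i a b
      rw [← ha, ← hb] at h1
      have := mul_le_mul_of_nonneg_left h2 hεs.le
      linarith
    have hT2 : ‖∑ j, F i j a • (y m j - M (x m j))‖ ≤ L' * (⨆ j, ‖y m j - M (x m j)‖) := by
      calc ‖∑ j, F i j a • (y m j - M (x m j))‖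
          ≤ ∑ j, ‖F i j a • (y m j - M (x m j))‖ := norm_sum_le _ _
        _ = ∑ j, |F i j a| * ‖y m j - M (x m j)‖ := by
            simp [norm_smul, Real.norm_eq_abs]
        _ ≤ ∑ j, |F i j a| * (⨆ j', ‖y m j' - M (x m j')‖) :=
            Finset.sum_le_sum fun j _ =>
              mul_le_mul_of_nonneg_left (hEle m j) (abs_nonneg _)
        _ = (∑ j, |F i j a|) * (⨆ j', ‖y m j' - M (x m j')‖) := by rw [Finset.sum_mul]
        _ ≤ L' * (⨆ j, ‖y m j - M (x m j)‖) := mul_le_mul_of_nonneg_right (hFbd i a) (hEnn m)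
    have hT3 : ‖∑ j, (F i j a - F i j b) • M (x m j)‖ ≤
        L'' * matSup (a - b) * ((1 + ε) * α) := by
      have hMx : ∀ j : Fin N, ‖M (x m j)‖ ≤ (1 + ε) * α := fun j => by
        have h1 := hM2 m hm' j
        have h2 := hbd m hm' j
        have := mul_le_mul_of_nonneg_left h2 hεs.le
        linarith
      calc ‖∑ j, (F i j a - F i j b) • M (x m j)‖
          ≤ ∑ j, ‖(F i j a - F i j b) • M (x m j)‖ := norm_sum_le _ _
        _ = ∑ j, |F i j a - F i j b| * ‖M (x m j)‖ := by
            simp [norm_smul, Real.norm_eq_abs]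
        _ ≤ ∑ j, |F i j a - F i j b| * ((1 + ε) * α) :=
            Finset.sum_le_sum fun j _ =>
              mul_le_mul_of_nonneg_left (hMx j) (abs_nonneg _)
        _ = (∑ j, |F i j a - F i j b|) * ((1 + ε) * α) := by rw [Finset.sum_mul]
        _ ≤ L'' * matSup (a - b) * ((1 + ε) * α) :=
            mul_le_mul_of_nonneg_right (hFLip i a b) (by positivity)
    -- assemble
    have htot : ‖y (m + 1) i - M (x (m + 1) i)‖ ≤
        (⨆ j, ‖y m j - M (x m j)‖) + h * ((1 + ε) * L * matSup (a - b) +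
          L' * (⨆ j, ‖y m j - M (x m j)‖) +
          L'' * matSup (a - b) * ((1 + ε) * α)) := by
      rw [hid]
      refine (norm_add_le _ _).trans ?_
      have hsm : ‖h • ((M (f i a) - M (f i b)) +
          ((∑ j, F i j a • (y m j - M (x m j))) + (∑ j, (F i j a - F i j b) • M (x m j))))‖ ≤
          h * ((1 + ε) * L * matSup (a - b) + L' * (⨆ j, ‖y m j - M (x m j)‖) +
            L'' * matSup (a - b) * ((1 + ε) * α)) := by
        rw [norm_smul, Real.norm_eq_abs, abs_of_pos hh]
        refine mul_le_mul_of_nonneg_left ?_ hh.le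
        refine (norm_add_le _ _).trans ?_
        have := norm_add_le (∑ j, F i j a • (y m j - M (x m j)))
          (∑ j, (F i j a - F i j b) • M (x m j))
        linarith
      have := hEle m i
      linarith
    refine htot.trans ?_
    rw [hAdef, hBdef]
    nlinarith [mul_le_mul_of_nonneg_left hS (mul_nonneg hh.le (by nlinarith : (0:ℝ) ≤ (1 + ε) * (L + α * L''))), hEnn m]
  -- discrete Grönwall induction
  intro n
  induction n with
  | zero =>
    intro _
    have hE0 : (⨆ i, ‖y 0 i - M (x 0 i)‖) ≤ 0 :=
      Real.iSup_le (fun i => by rw [hy0 i]; simp) le_rfl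
    simpa using hE0
  | succ m ih =>
    intro hn
    have hm : m < n₀ := hn
    have ihm := ih hm.le
    have step := key m hm
    have hexp1 : (1 : ℝ) + h * A ≤ Real.exp (h * A) := by
      have := Real.add_one_le_exp (h * A); linarith
    have hexp2 : (1 : ℝ) ≤ Real.exp (h * (↑(m + 1)) * A) :=
      Real.one_le_exp (by positivity)
    have hsplit : Real.exp (h * (↑(m + 1)) * A) =
        Real.exp (h * (↑m) * A) * Real.exp (h * A) := by
      rw [← Real.exp_add]
      congr 1
      push_cast
      ring
    have hEm := hEnn m
    have hp1 : (0:ℝ) ≤ Real.exp (h * (↑m) * A) := (Real.exp_pos _).le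
    calc (⨆ i, ‖y (m + 1) i - M (x (m + 1) i)‖)
        ≤ (1 + h * A) * (⨆ i, ‖y m i - M (x m i)‖) + ε * h * B := step
      _ ≤ (1 + h * A) * (ε * h * (↑m) * B * Real.exp (h * (↑m) * A)) + ε * h * B := by
          have h1hA : (0:ℝ) ≤ 1 + h * A := by nlinarith
          nlinarith [mul_le_mul_of_nonneg_left ihm h1hA]
      _ ≤ ε * h * (↑(m + 1)) * B * Real.exp (h * (↑(m + 1)) * A) := by
          rw [hsplit]
          have hmn : (0:ℝ) ≤ (m:ℝ) := Nat.cast_nonneg m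
          have hc : (0:ℝ) ≤ ε * h * (↑m) * B * Real.exp (h * (↑m) * A) := by positivity
          have key2 : (1 + h * A) * (ε * h * (↑m) * B * Real.exp (h * (↑m) * A)) ≤
              ε * h * (↑m) * B * Real.exp (h * (↑m) * A) * Real.exp (h * A) := by
            nlinarith [mul_le_mul_of_nonneg_left hexp1 hc]
          have hone : (1:ℝ) ≤ Real.exp (h * (↑m) * A) * Real.exp (h * A) := by
            rw [← Real.exp_add]
            refine Real.one_le_exp ?_
            have : (0:ℝ) ≤ h * ↑m * A := by positivity
            nlinarith [mul_pos hh hApos]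
          have key3 : ε * h * B ≤ ε * h * B * (Real.exp (h * (↑m) * A) * Real.exp (h * A)) := by
            nlinarith [mul_le_mul_of_nonneg_left hone (by positivity : (0:ℝ) ≤ ε * h * B)]
          push_cast
          nlinarith [key2, key3]
end
end

section
/- Let μ be a compactly supported probability measure on ℝ with support contained in [a,b], σ = b - a, and let x_0 = a and x_i (for i = 1,…,N-1) be the quantiles defined by μ((-∞, x_i]) = i/N. Then for every Lipschitz function ξ : ℝ → ℝ, |∫ℝ ξ dμ - (1/N)Σ_{i=0}^{N-1} ξ(x_i)| ≤ σ·Lip(ξ)/N. In particular W₁(μ, (1/N)Σ_{i=0}^{N-1} δ_{x_i}) ≤ σ/N. -/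
/-!
Cut `ℝ` into the `N` cells `(t_i, t_{i+1}]` between consecutive quantiles (with `t_N = b`). Each
cell has mass `1/N`, and `μ`-almost all of it lies in `[x_i, x_{i+1}]`, so on it `ξ` differs from
`ξ(x_i)` by at most `Lip(ξ) (x_{i+1} - x_i)`. Summing over the cells, the errors telescope to
`Lip(ξ) (b - a) / N`. The Wasserstein bound is the case `Lip(ξ) ≤ 1` of the Kantorovich–Rubinstein
supremum.
-/

open MeasureTheory Set

noncomputable section

/-- The Monge–Kantorovich–Rubinstein (Wasserstein-1) distance, via its dual
(Lipschitz) formulation. -/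
def W1 {E : Type*} [MeasurableSpace E] [PseudoMetricSpace E]
    (μ ν : Measure E) : ℝ :=
  sSup { r | ∃ ξ : E → ℝ, LipschitzWith 1 ξ ∧ r = |∫ z, ξ z ∂μ - ∫ z, ξ z ∂ν| }

section

variable {μ : Measure ℝ} {ξ : ℝ → ℝ} {K : NNReal}

theorem abs_setIntegral_Ioc_sub_le_of_lipschitzWith [IsLocallyFiniteMeasure μ]
    (hξ : LipschitzWith K ξ) {u v c d : ℝ} (h : ∀ᵐ z ∂μ, z ∈ Ioc u v → z ∈ Icc c d) :
    |∫ z in Ioc u v, ξ z ∂μ - μ.real (Ioc u v) * ξ c| ≤ K * (d - c) * μ.real (Ioc u v) := by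
  have hfin : μ (Ioc u v) < ⊤ := measure_Ioc_lt_top
  rw [← smul_eq_mul, ← setIntegral_const, ← Real.norm_eq_abs,
    ← integral_sub hξ.continuous.integrableOn_Ioc (integrableOn_const hfin.ne)]
  refine norm_setIntegral_le_of_norm_le_const_ae' hfin ?_
  filter_upwards [h] with z hz hzs
  obtain ⟨hcz, hzd⟩ := hz hzs
  calc ‖ξ z - ξ c‖ = dist (ξ z) (ξ c) := (Real.dist_eq _ _).symm
    _ ≤ K * dist z c := hξ.dist_le_mul z c
    _ ≤ K * (d - c) := by
      gcongr
      rw [Real.dist_eq, abs_of_nonneg (by linarith)]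
      linarith

theorem integral_eq_sum_setIntegral_Ioc {f : ℝ → ℝ} {t : ℕ → ℝ} (ht : Monotone t) {n : ℕ}
    (hsupp : ∀ᵐ z ∂μ, z ∈ Ioc (t 0) (t n)) (hf : IntegrableOn f (Ioc (t 0) (t n)) μ) :
    ∫ z, f z ∂μ = ∑ i ∈ Finset.range n, ∫ z in Ioc (t i) (t (i + 1)), f z ∂μ := by
  have hsub : ∀ i < n, Ioc (t i) (t (i + 1)) ⊆ Ioc (t 0) (t n) := fun i hi =>
    Ioc_subset_Ioc (ht (Nat.zero_le i)) (ht hi)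
  calc ∫ z, f z ∂μ = ∫ z in t 0..t n, f z ∂μ := by
        rw [intervalIntegral.integral_of_le (ht (Nat.zero_le n)),
          Measure.restrict_eq_self_of_ae_mem hsupp]
    _ = ∑ i ∈ Finset.range n, ∫ z in t i..t (i + 1), f z ∂μ :=
        (intervalIntegral.sum_integral_adjacent_intervals fun i hi =>
          (intervalIntegrable_iff_integrableOn_Ioc_of_le (ht i.le_succ)).2
            (hf.mono_set (hsub i hi))).symm
    _ = _ := Finset.sum_congr rfl fun i _ => intervalIntegral.integral_of_le (ht i.le_succ)

theorem abs_integral_sub_mul_sum_le_of_lipschitzWith [IsLocallyFiniteMeasure μ]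
    (hξ : LipschitzWith K ξ) {t c : ℕ → ℝ} (ht : Monotone t) {n : ℕ} {m : ℝ}
    (hsupp : ∀ᵐ z ∂μ, z ∈ Ioc (t 0) (t n))
    (hmass : ∀ i < n, μ.real (Ioc (t i) (t (i + 1))) = m)
    (hloc : ∀ i < n, ∀ᵐ z ∂μ, z ∈ Ioc (t i) (t (i + 1)) → z ∈ Icc (c i) (c (i + 1))) :
    |∫ z, ξ z ∂μ - m * ∑ i ∈ Finset.range n, ξ (c i)| ≤ K * (c n - c 0) * m := by
  rw [integral_eq_sum_setIntegral_Ioc ht hsupp hξ.continuous.integrableOn_Ioc, Finset.mul_sum,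
    ← Finset.sum_sub_distrib]
  calc _ ≤ ∑ i ∈ Finset.range n, |∫ z in Ioc (t i) (t (i + 1)), ξ z ∂μ - m * ξ (c i)| :=
        Finset.abs_sum_le_sum_abs _ _
    _ ≤ ∑ i ∈ Finset.range n, K * (c (i + 1) - c i) * m := by
        refine Finset.sum_le_sum fun i hi => ?_
        rw [Finset.mem_range] at hi
        simpa only [hmass i hi] using abs_setIntegral_Ioc_sub_le_of_lipschitzWith hξ (hloc i hi)
    _ = K * (c n - c 0) * m := by
        rw [← Finset.sum_mul, ← Finset.mul_sum, Finset.sum_range_sub]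

theorem integral_smul_sum_dirac {α ι : Type*} [MeasurableSpace α] [MeasurableSingletonClass α]
    [Fintype ι] (f : α → ℝ) (r : ENNReal) (x : ι → α) :
    ∫ z, f z ∂(r • ∑ i, Measure.dirac (x i)) = r.toReal * ∑ i, f (x i) := by
  rw [integral_smul_measure, integral_finsetSum_measure fun i _ => integrable_dirac enorm_lt_top]
  simp only [integral_dirac, smul_eq_mul]

section QuantileGrid

variable {N : ℕ} (x : Fin N → ℝ) (a b : ℝ)

def quantileSeq (i : ℕ) : ℝ :=
  if h : i < N then x ⟨i, h⟩ else b

@[simp]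
theorem quantileSeq_coe (i : Fin N) : quantileSeq x b i = x i :=
  dif_pos i.isLt

@[simp]
theorem quantileSeq_self : quantileSeq x b N = b :=
  dif_neg (lt_irrefl N)

/-- The first cell is opened below `a` so that it still carries a possible atom at `a`. -/
def quantileGrid : ℕ → ℝ :=
  Function.update (quantileSeq x b) 0 (a - 1)

variable {x a b}

theorem measureReal_Iic_quantileSeq [IsProbabilityMeasure μ] (hsupp : μ (Icc a b)ᶜ = 0)
    (hquant : ∀ i : Fin N, (i : ℕ) ≠ 0 → μ (Iic (x i)) = ENNReal.ofReal ((i : ℕ) / N))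
    {i : ℕ} (hi : i ≠ 0) (hiN : i ≤ N) :
    μ.real (Iic (quantileSeq x b i)) = i / N := by
  rcases hiN.lt_or_eq with hlt | rfl
  · rw [quantileSeq, dif_pos hlt, measureReal_def, hquant ⟨i, hlt⟩ hi,
      ENNReal.toReal_ofReal (by positivity)]
  · have hb : μ (Iic b) = 1 := (prob_compl_eq_zero_iff measurableSet_Iic).1
      (measure_mono_null (compl_subset_compl.2 Icc_subset_Iic_self) hsupp)
    rw [quantileSeq_self, div_self (Nat.cast_ne_zero.2 hi), measureReal_def, hb,
      ENNReal.toReal_one]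

theorem measureReal_Iic_quantileGrid [IsProbabilityMeasure μ] (hsupp : μ (Icc a b)ᶜ = 0)
    (hquant : ∀ i : Fin N, (i : ℕ) ≠ 0 → μ (Iic (x i)) = ENNReal.ofReal ((i : ℕ) / N))
    {i : ℕ} (hiN : i ≤ N) :
    μ.real (Iic (quantileGrid x a b i)) = i / N := by
  rcases eq_or_ne i 0 with rfl | hi
  · have h : μ (Iic (a - 1)) = 0 := measure_mono_null
      (fun z hz => fun hz' => by linarith [mem_Iic.1 hz, hz'.1]) hsupp
    simp [quantileGrid, measureReal_def, h]
  · rw [quantileGrid, Function.update_of_ne hi]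
    exact measureReal_Iic_quantileSeq hsupp hquant hi hiN

theorem monotone_quantileGrid [IsProbabilityMeasure μ] (hN : 0 < N) (hsupp : μ (Icc a b)ᶜ = 0)
    (hquant : ∀ i : Fin N, (i : ℕ) ≠ 0 → μ (Iic (x i)) = ENNReal.ofReal ((i : ℕ) / N)) :
    Monotone (quantileGrid x a b) := by
  refine monotone_nat_of_le_succ fun i => ?_
  rcases lt_or_ge i N with hi | hi
  · refine ((ProbabilityTheory.cdf μ).mono.reflect_lt ?_).le
    rw [ProbabilityTheory.cdf_eq_real, ProbabilityTheory.cdf_eq_real,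
      measureReal_Iic_quantileGrid hsupp hquant hi.le, measureReal_Iic_quantileGrid hsupp hquant hi]
    gcongr
    norm_num
  · have hi0 : i ≠ 0 := by omega
    simp [quantileGrid, quantileSeq, hi0, hi.not_gt, (Nat.lt_succ_of_le hi).not_gt]

theorem measureReal_Ioc_quantileGrid [IsProbabilityMeasure μ] (hN : 0 < N)
    (hsupp : μ (Icc a b)ᶜ = 0)
    (hquant : ∀ i : Fin N, (i : ℕ) ≠ 0 → μ (Iic (x i)) = ENNReal.ofReal ((i : ℕ) / N))
    {i : ℕ} (hi : i < N) :
    μ.real (Ioc (quantileGrid x a b i) (quantileGrid x a b (i + 1))) = 1 / N := by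
  rw [← Iic_sdiff_Iic, measureReal_sdiff
      (Iic_subset_Iic.2 (monotone_quantileGrid hN hsupp hquant i.le_succ)) measurableSet_Iic,
    measureReal_Iic_quantileGrid hsupp hquant hi, measureReal_Iic_quantileGrid hsupp hquant hi.le]
  push_cast
  ring

theorem ae_mem_Ioc_quantileGrid (hN : 0 < N) (hsupp : μ (Icc a b)ᶜ = 0) :
    ∀ᵐ z ∂μ, z ∈ Ioc (quantileGrid x a b 0) (quantileGrid x a b N) := by
  filter_upwards [ae_iff.2 hsupp] with z hz
  rw [quantileGrid, Function.update_self, Function.update_of_ne hN.ne', quantileSeq_self]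
  exact ⟨by linarith [hz.1], hz.2⟩

theorem ae_mem_Icc_of_mem_Ioc_quantileGrid (hN : 0 < N) (hx0 : x ⟨0, hN⟩ = a)
    (hsupp : μ (Icc a b)ᶜ = 0) (i : ℕ) :
    ∀ᵐ z ∂μ, z ∈ Ioc (quantileGrid x a b i) (quantileGrid x a b (i + 1)) →
      z ∈ Icc (quantileSeq x b i) (quantileSeq x b (i + 1)) := by
  filter_upwards [ae_iff.2 hsupp] with z hz hzi
  rw [quantileGrid, Function.update_of_ne i.succ_ne_zero] at hzi
  refine ⟨?_, hzi.2⟩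
  rcases eq_or_ne i 0 with rfl | hi
  · rw [quantileSeq, dif_pos hN, hx0]
    exact hz.1
  · rw [Function.update_of_ne hi] at hzi
    exact hzi.1.le

end QuantileGrid

end

theorem stmt_9_general (μ : Measure ℝ) [IsProbabilityMeasure μ]
    (a b : ℝ) (hsupp : μ (Icc a b)ᶜ = 0)
    (N : ℕ) (hN : 0 < N)
    (x : Fin N → ℝ) (hx0 : x ⟨0, hN⟩ = a)
    (hquant : ∀ i : Fin N, (i : ℕ) ≠ 0 → μ (Iic (x i)) = ENNReal.ofReal ((i : ℕ) / N)) :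
    (∀ (ξ : ℝ → ℝ) (K : NNReal), LipschitzWith K ξ →
      |∫ z, ξ z ∂μ - (1 / (N : ℝ)) * ∑ i, ξ (x i)| ≤ (b - a) * K / N) ∧
    W1 μ ((N : ENNReal)⁻¹ • ∑ i, Measure.dirac (x i)) ≤ (b - a) / N := by
  have hriemann (ξ : ℝ → ℝ) (K : NNReal) (hξ : LipschitzWith K ξ) :
      |∫ z, ξ z ∂μ - (1 / (N : ℝ)) * ∑ i, ξ (x i)| ≤ (b - a) * K / N := by
    have h := abs_integral_sub_mul_sum_le_of_lipschitzWith hξ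
      (monotone_quantileGrid hN hsupp hquant) (ae_mem_Ioc_quantileGrid hN hsupp)
      (fun i hi => measureReal_Ioc_quantileGrid hN hsupp hquant hi)
      (fun i _ => ae_mem_Icc_of_mem_Ioc_quantileGrid hN hx0 hsupp i)
    have hseq0 : quantileSeq x b 0 = a := (dif_pos hN).trans hx0
    rw [← Fin.sum_univ_eq_sum_range (fun i => ξ (quantileSeq x b i))] at h
    simp only [quantileSeq_coe, quantileSeq_self, hseq0] at h
    exact h.trans_eq (by ring)
  refine ⟨hriemann, csSup_le ⟨_, 0, LipschitzWith.const' 0, rfl⟩ ?_⟩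
  rintro r ⟨ξ, hξ, rfl⟩
  rw [integral_smul_sum_dirac, ENNReal.toReal_inv, ENNReal.toReal_natCast, ← one_div]
  simpa using hriemann ξ 1 hξ

theorem stmt_9 (μ : Measure ℝ) [IsProbabilityMeasure μ]
    (a b : ℝ) (hsupp : μ (Icc a b)ᶜ = 0) (hσ : 0 < b - a)
    (N : ℕ) (hN : 0 < N)
    (x : Fin N → ℝ) (hx0 : x ⟨0, hN⟩ = a)
    (hquant : ∀ i : Fin N, (i : ℕ) ≠ 0 → μ (Iic (x i)) = ENNReal.ofReal ((i : ℕ) / N)) :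
    (∀ (ξ : ℝ → ℝ) (K : NNReal), LipschitzWith K ξ →
      |∫ z, ξ z ∂μ - (1 / (N : ℝ)) * ∑ i, ξ (x i)| ≤ (b - a) * K / N) ∧
    W1 μ ((N : ENNReal)⁻¹ • ∑ i, Measure.dirac (x i)) ≤ (b - a) / N :=
  stmt_9_general μ a b hsupp N hN x hx0 hquant

end
end

section
/- Let μ¹,…,μ^d be probability measures on ℝ with finite first moments, and suppose for each j there are N_j points x_0^j,…,x_{N_j-1}^j with W₁(μ^j, (1/N_j)Σ_i δ_{x_i^j}) ≤ ε_j. Let N = N_1⋯N_d and let X = ∏_{j=1}^d {x_0^j,…,x_{N_j-1}^j} ⊂ ℝ^d be the product grid. Then W₁(μ¹⊗⋯⊗μ^d, (1/N)Σ_{x∈X} δ_x) ≤ ε_1 + ⋯ + ε_d, where W₁ on ℝ^d is taken with respect to the Euclidean norm. -/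
open MeasureTheory

noncomputable section

/-!
A 1-Lipschitz test function on Euclidean `ℝ^d` is 1-Lipschitz for the `ℓ¹` distance of the
coordinates, and the grid measure is the product of the one-dimensional empirical measures.
Integrating out all coordinates but the first (Fubini) leaves a 1-Lipschitz function of the first
coordinate, which costs `ε₁` when `μ¹` is replaced by its empirical measure; replacing the
remaining factors costs, uniformly in the first coordinate, `ε₂ + ⋯ + ε_d` by induction on `d`.
-/

theorem W1_le_of_forall {E : Type*} [MeasurableSpace E] [PseudoMetricSpace E]
    {μ ν : Measure E} {c : ℝ}
    (h : ∀ ξ : E → ℝ, LipschitzWith 1 ξ → |∫ x, ξ x ∂μ - ∫ x, ξ x ∂ν| ≤ c) : W1 μ ν ≤ c :=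
  csSup_le ⟨_, fun _ => 0, LipschitzWith.const' 0, rfl⟩ fun _ ⟨ξ, hξ, hr⟩ => hr ▸ h ξ hξ

section FirstMoment

variable {E : Type*} [PseudoMetricSpace E] [MeasurableSpace E] [OpensMeasurableSpace E]
  {μ ν : Measure E} {x₀ : E}

theorem LipschitzWith.integrable_of_integrable_dist [IsFiniteMeasure μ]
    (hμ : Integrable (fun x => dist x x₀) μ) {K : NNReal} {ξ : E → ℝ} (hξ : LipschitzWith K ξ) :
    Integrable ξ μ := by
  refine ((integrable_const |ξ x₀|).add (hμ.const_mul K)).mono'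
    hξ.continuous.aestronglyMeasurable (Filter.Eventually.of_forall fun x => ?_)
  have := hξ.dist_le_mul x x₀
  rw [Real.dist_eq] at this
  simp only [Pi.add_apply, Real.norm_eq_abs]
  linarith [abs_sub_abs_le_abs_sub (ξ x) (ξ x₀)]

theorem LipschitzWith.abs_integral_sub_le_integral_dist [IsProbabilityMeasure μ]
    (hμ : Integrable (fun x => dist x x₀) μ) {ξ : E → ℝ} (hξ : LipschitzWith 1 ξ) :
    |∫ x, ξ x ∂μ - ξ x₀| ≤ ∫ x, dist x x₀ ∂μ := by
  have hint := hξ.integrable_of_integrable_dist hμ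
  calc |∫ x, ξ x ∂μ - ξ x₀| = ‖∫ x, (ξ x - ξ x₀) ∂μ‖ := by
        rw [integral_sub hint (integrable_const _), integral_const, probReal_univ, one_smul,
          Real.norm_eq_abs]
    _ ≤ ∫ x, dist (ξ x) (ξ x₀) ∂μ := norm_integral_le_integral_norm _
    _ ≤ ∫ x, dist x x₀ ∂μ :=
        integral_mono (hint.sub (integrable_const _)).norm hμ fun x => by
          simpa using hξ.dist_le_mul x x₀

/-- Without first moments the set in the definition of `W1` may be unbounded, and then `W1` is the
junk value `0`. -/
theorem abs_integral_sub_integral_le_W1 [IsProbabilityMeasure μ] [IsProbabilityMeasure ν]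
    (hμ : Integrable (fun x => dist x x₀) μ) (hν : Integrable (fun x => dist x x₀) ν)
    {ξ : E → ℝ} (hξ : LipschitzWith 1 ξ) :
    |∫ x, ξ x ∂μ - ∫ x, ξ x ∂ν| ≤ W1 μ ν := by
  refine le_csSup ⟨∫ x, dist x x₀ ∂μ + ∫ x, dist x x₀ ∂ν, ?_⟩ ⟨ξ, hξ, rfl⟩
  rintro r ⟨η, hη, rfl⟩
  calc |∫ x, η x ∂μ - ∫ x, η x ∂ν| = |(∫ x, η x ∂μ - η x₀) - (∫ x, η x ∂ν - η x₀)| := by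
        ring_nf
    _ ≤ |∫ x, η x ∂μ - η x₀| + |∫ x, η x ∂ν - η x₀| := abs_sub _ _
    _ ≤ _ := add_le_add (hη.abs_integral_sub_le_integral_dist hμ)
        (hη.abs_integral_sub_le_integral_dist hν)

end FirstMoment

theorem lipschitzWith_integral {X α G : Type*} [PseudoMetricSpace X] [MeasurableSpace α]
    [NormedAddCommGroup G] [NormedSpace ℝ G] {Q : Measure α} [IsProbabilityMeasure Q]
    {f : X → α → G} {K : NNReal} (hint : ∀ t, Integrable (f t) Q)
    (hf : ∀ y, LipschitzWith K (f · y)) : LipschitzWith K fun t => ∫ y, f t y ∂Q := by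
  refine LipschitzWith.of_dist_le_mul fun t t' => ?_
  rw [dist_eq_norm, ← integral_sub (hint t) (hint t')]
  simpa using norm_integral_le_of_norm_le_const (μ := Q) (C := K * dist t t')
    (Filter.Eventually.of_forall fun y => by simpa [dist_eq_norm] using (hf y).dist_le_mul t t')

theorem integral_pi_fin_succ {n : ℕ} {E G : Type*} [MeasurableSpace E] [NormedAddCommGroup G]
    [NormedSpace ℝ G] (m : Fin (n + 1) → Measure E) [∀ i, SigmaFinite (m i)]
    {F : (Fin (n + 1) → E) → G} (hF : Integrable F (Measure.pi m)) :
    ∫ x, F x ∂Measure.pi m = ∫ t, ∫ y, F (Fin.cons t y) ∂Measure.pi (fun j => m j.succ) ∂m 0 := by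
  set e := (MeasurableEquiv.piFinSuccAbove (fun _ => E) 0).symm
  have he : MeasurePreserving e ((m 0).prod (Measure.pi fun j => m j.succ)) (Measure.pi m) := by
    simpa only [Fin.succAbove_zero] using (measurePreserving_piFinSuccAbove m 0).symm
  rw [← he.integral_comp' F,
    integral_prod (fun z => F (e z)) ((he.integrable_comp_emb e.measurableEmbedding).mpr hF)]
  simp [e, MeasurableEquiv.piFinSuccAbove_symm_apply, Fin.insertNthEquiv, Fin.insertNth_zero']

theorem continuous_of_dist_le_sum_dist {E ι Y : Type*} [PseudoMetricSpace E]
    [PseudoMetricSpace Y] [Fintype ι] {F : (ι → E) → Y}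
    (hF : ∀ x y, dist (F x) (F y) ≤ ∑ j, dist (x j) (y j)) : Continuous F := by
  refine (LipschitzWith.of_dist_le_mul (K := Fintype.card ι) fun x y => ?_).continuous
  calc dist (F x) (F y) ≤ ∑ j, dist (x j) (y j) := hF x y
    _ ≤ ∑ _j : ι, dist x y := Finset.sum_le_sum fun j _ => dist_le_pi_dist x y j
    _ = _ := by simp

theorem EuclideanSpace.dist_le_sum_dist {ι : Type*} [Fintype ι] (x y : EuclideanSpace ℝ ι) :
    dist x y ≤ ∑ i, dist (x i) (y i) := by
  rw [EuclideanSpace.dist_eq, Real.sqrt_le_left (Finset.sum_nonneg fun _ _ => dist_nonneg)]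
  exact Finset.sum_sq_le_sq_sum_of_nonneg fun _ _ => dist_nonneg

section Product

variable {E : Type*} [PseudoMetricSpace E] [MeasurableSpace E] [BorelSpace E]
  [SecondCountableTopology E] {x₀ : E}

theorem integrable_pi_of_dist_le_sum_dist {ι : Type*} [Fintype ι] (μ : ι → Measure E)
    [∀ j, IsProbabilityMeasure (μ j)] (hμ : ∀ j, Integrable (fun x => dist x x₀) (μ j))
    {F : (ι → E) → ℝ} (hF : ∀ x y, dist (F x) (F y) ≤ ∑ j, dist (x j) (y j)) :
    Integrable F (Measure.pi μ) := by
  have hcoord : ∀ j, Integrable (fun x : ι → E => dist (x j) x₀) (Measure.pi μ) := fun j =>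
    Integrable.comp_measurable (g := fun t => dist t x₀)
      ((measurePreserving_eval μ j).map_eq ▸ hμ j) (measurable_pi_apply j)
  refine ((integrable_const |F fun _ => x₀|).add
    (integrable_finsetSum Finset.univ fun j _ => hcoord j)).mono'
    (continuous_of_dist_le_sum_dist hF).aestronglyMeasurable
    (Filter.Eventually.of_forall fun x => ?_)
  have := hF x fun _ => x₀
  rw [Real.dist_eq] at this
  simp only [Pi.add_apply, Real.norm_eq_abs]
  linarith [abs_sub_abs_le_abs_sub (F x) (F fun _ => x₀)]

theorem abs_integral_pi_sub_integral_pi_le {n : ℕ} (μ ν : Fin n → Measure E)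
    [∀ j, IsProbabilityMeasure (μ j)] [∀ j, IsProbabilityMeasure (ν j)]
    (hμ : ∀ j, Integrable (fun x => dist x x₀) (μ j))
    (hν : ∀ j, Integrable (fun x => dist x x₀) (ν j)) {ε : Fin n → ℝ}
    (hε : ∀ j, W1 (μ j) (ν j) ≤ ε j)
    {F : (Fin n → E) → ℝ} (hF : ∀ x y, dist (F x) (F y) ≤ ∑ j, dist (x j) (y j)) :
    |∫ x, F x ∂Measure.pi μ - ∫ x, F x ∂Measure.pi ν| ≤ ∑ j, ε j := by
  induction n with
  | zero => simp [Measure.pi_of_empty μ, Measure.pi_of_empty ν]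
  | succ n ih =>
    have hslice : ∀ t, ∀ y y' : Fin n → E,
        dist (F (Fin.cons t y)) (F (Fin.cons t y')) ≤ ∑ j, dist (y j) (y' j) := fun t y y' => by
      simpa [Fin.sum_univ_succ] using hF (Fin.cons t y) (Fin.cons t y')
    have hfirst : ∀ y : Fin n → E, LipschitzWith 1 fun t => F (Fin.cons t y) := fun y =>
      LipschitzWith.of_dist_le_mul fun t t' => by
        simpa [Fin.sum_univ_succ] using hF (Fin.cons t y) (Fin.cons t' y)
    have hG : ∀ (m : Fin n → Measure E) [∀ j, IsProbabilityMeasure (m j)],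
        (∀ j, Integrable (fun x => dist x x₀) (m j)) →
          LipschitzWith 1 fun t => ∫ y, F (Fin.cons t y) ∂Measure.pi m := fun m _ hm =>
      lipschitzWith_integral (fun t => integrable_pi_of_dist_le_sum_dist m hm (hslice t)) hfirst
    have hGμ := hG _ fun j => hμ j.succ
    have hGν := hG _ fun j => hν j.succ
    rw [integral_pi_fin_succ μ (integrable_pi_of_dist_le_sum_dist μ hμ hF),
      integral_pi_fin_succ ν (integrable_pi_of_dist_le_sum_dist ν hν hF), Fin.sum_univ_succ]
    have h_tail : |∫ t, ∫ y, F (Fin.cons t y) ∂Measure.pi (fun j => μ j.succ) ∂μ 0 -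
        ∫ t, ∫ y, F (Fin.cons t y) ∂Measure.pi (fun j => ν j.succ) ∂μ 0| ≤
          ∑ j : Fin n, ε j.succ := by
      rw [← integral_sub (hGμ.integrable_of_integrable_dist (hμ 0))
        (hGν.integrable_of_integrable_dist (hμ 0))]
      simpa using norm_integral_le_of_norm_le_const (μ := μ 0) (Filter.Eventually.of_forall
        fun t => (Real.norm_eq_abs _).trans_le <| ih _ _ (fun j => hμ j.succ) (fun j => hν j.succ)
          (fun j => hε j.succ) (hslice t))
    have h_head := (abs_integral_sub_integral_le_W1 (hμ 0) (hν 0) hGν).trans (hε 0)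
    exact ((abs_sub_le _ _ _).trans (add_le_add h_tail h_head)).trans_eq (add_comm _ _)

theorem W1_map_pi_le_sum {n : ℕ} {Y : Type*} [PseudoMetricSpace Y] [MeasurableSpace Y]
    [BorelSpace Y] (μ ν : Fin n → Measure E) [∀ j, IsProbabilityMeasure (μ j)]
    [∀ j, IsProbabilityMeasure (ν j)] (hμ : ∀ j, Integrable (fun x => dist x x₀) (μ j))
    (hν : ∀ j, Integrable (fun x => dist x x₀) (ν j)) {ε : Fin n → ℝ}
    (hε : ∀ j, W1 (μ j) (ν j) ≤ ε j) {f : (Fin n → E) → Y}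
    (hf : ∀ x y, dist (f x) (f y) ≤ ∑ j, dist (x j) (y j)) :
    W1 ((Measure.pi μ).map f) ((Measure.pi ν).map f) ≤ ∑ j, ε j := by
  refine W1_le_of_forall fun ξ hξ => ?_
  rw [integral_map (continuous_of_dist_le_sum_dist hf).aemeasurable
      hξ.continuous.aestronglyMeasurable,
    integral_map (continuous_of_dist_le_sum_dist hf).aemeasurable
      hξ.continuous.aestronglyMeasurable]
  exact abs_integral_pi_sub_integral_pi_le μ ν hμ hν hε fun x y =>
    (hξ.dist_le_mul _ _).trans (by simpa using hf x y)

end Product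

theorem MeasureTheory.Measure.pi_smul_sum_dirac {ι : Type*} [Fintype ι] [DecidableEq ι]
    {α κ : ι → Type*} [∀ i, MeasurableSpace (α i)] [∀ i, Fintype (κ i)] {c : ι → ENNReal}
    (hc : ∀ i, c i ≠ ⊤) (x : ∀ i, κ i → α i) :
    Measure.pi (fun i => c i • ∑ k, dirac (x i k)) =
      (∏ i, c i) • ∑ p : ∀ i, κ i, dirac fun i => x i (p i) := by
  have : ∀ i, IsFiniteMeasure (c i • ∑ k, dirac (x i k)) := fun i =>
    ⟨by simpa [lt_top_iff_ne_top] using ENNReal.mul_ne_top (hc i) (ENNReal.natCast_ne_top _)⟩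
  refine Measure.pi_eq fun s hs => ?_
  simp only [Measure.smul_apply, Measure.finsetSum_apply, smul_eq_mul,
    dirac_apply' _ (MeasurableSet.univ_pi hs), dirac_apply' _ (hs _), Finset.prod_mul_distrib,
    Finset.prod_univ_sum, Fintype.piFinset_univ]
  simp only [← Finset.coe_univ, Set.indicator_pi_one_apply]

theorem MeasureTheory.isProbabilityMeasure_inv_smul_sum_dirac {α : Type*} [MeasurableSpace α]
    {N : ℕ} (hN : N ≠ 0) (x : Fin N → α) :
    IsProbabilityMeasure ((N : ENNReal)⁻¹ • ∑ i, Measure.dirac (x i)) :=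
  ⟨by simp [ENNReal.inv_mul_cancel (Nat.cast_ne_zero.mpr hN) (ENNReal.natCast_ne_top N)]⟩

theorem MeasureTheory.integrable_smul_sum_dirac {α E : Type*} [MeasurableSpace α]
    [MeasurableSingletonClass α] [NormedAddCommGroup E] {κ : Type*} [Fintype κ] {c : ENNReal}
    (hc : c ≠ ⊤) (x : κ → α) (f : α → E) : Integrable f (c • ∑ k, Measure.dirac (x k)) :=
  (integrable_finsetSum_measure.mpr fun _ _ => integrable_dirac enorm_lt_top).smul_measure hc

theorem stmt_10_general {d : ℕ}
    (μ : Fin d → Measure ℝ) [∀ j, IsProbabilityMeasure (μ j)]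
    (hmom : ∀ j, Integrable (fun t : ℝ => |t|) (μ j))
    (Nf : Fin d → ℕ) (hNf : ∀ j, 0 < Nf j)
    (pts : (j : Fin d) → Fin (Nf j) → ℝ)
    (ε : Fin d → ℝ)
    (happrox : ∀ j, W1 (μ j) ((Nf j : ENNReal)⁻¹ • ∑ i, Measure.dirac (pts j i)) ≤ ε j) :
    W1 ((Measure.pi μ : Measure (Fin d → ℝ)).map
          (EuclideanSpace.equiv (Fin d) ℝ).symm)
        ((∏ j, (Nf j : ENNReal))⁻¹ • ∑ p : (j : Fin d) → Fin (Nf j),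
          Measure.dirac ((EuclideanSpace.equiv (Fin d) ℝ).symm fun j => pts j (p j))) ≤
      ∑ j, ε j := by
  set e := (EuclideanSpace.equiv (Fin d) ℝ).symm
  set ν := fun j => (Nf j : ENNReal)⁻¹ • ∑ i, Measure.dirac (pts j i)
  have hν : ∀ j, IsProbabilityMeasure (ν j) := fun j =>
    isProbabilityMeasure_inv_smul_sum_dirac (hNf j).ne' (pts j)
  have hNf_inv : ∀ j, (Nf j : ENNReal)⁻¹ ≠ ⊤ := fun j => by simpa using (hNf j).ne'
  have hgrid : (∏ j, (Nf j : ENNReal))⁻¹ • ∑ p : (j : Fin d) → Fin (Nf j),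
      Measure.dirac (e fun j => pts j (p j)) = (Measure.pi ν).map e := by
    rw [Measure.pi_smul_sum_dirac hNf_inv, Measure.map_smul,
      Measure.map_finset_sum' e.continuous.measurable.aemeasurable, ENNReal.prod_inv_distrib]
    · simp [Measure.map_dirac' e.continuous.measurable]
    · exact fun i _ j _ _ => Or.inr (ENNReal.natCast_ne_top _)
  rw [hgrid]
  refine W1_map_pi_le_sum μ ν (x₀ := 0) (by simpa using hmom)
    (fun j => integrable_smul_sum_dirac (hNf_inv j) _ _) happrox fun x y => ?_
  simpa [e] using EuclideanSpace.dist_le_sum_dist (e x) (e y)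

theorem stmt_10 {d : ℕ}
    (μ : Fin d → Measure ℝ) [∀ j, IsProbabilityMeasure (μ j)]
    (hmom : ∀ j, Integrable (fun t : ℝ => |t|) (μ j))
    (Nf : Fin d → ℕ) (hNf : ∀ j, 0 < Nf j)
    (pts : (j : Fin d) → Fin (Nf j) → ℝ)
    (ε : Fin d → ℝ) (hε : ∀ j, 0 ≤ ε j)
    (happrox : ∀ j, W1 (μ j) ((Nf j : ENNReal)⁻¹ • ∑ i, Measure.dirac (pts j i)) ≤ ε j) :
    W1 ((Measure.pi μ : Measure (Fin d → ℝ)).map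
          (EuclideanSpace.equiv (Fin d) ℝ).symm)
        ((∏ j, (Nf j : ENNReal))⁻¹ • ∑ p : (j : Fin d) → Fin (Nf j),
          Measure.dirac ((EuclideanSpace.equiv (Fin d) ℝ).symm fun j => pts j (p j))) ≤
      ∑ j, ε j :=
  stmt_10_general μ hmom Nf hNf pts ε happrox

end
end

section
/- Let σ_1 ≥ σ_2 ≥ ⋯ ≥ σ_d > 0 and let μ = μ¹⊗⋯⊗μ^d be a product probability measure on ℝ^d with supp μ^j ⊆ [a_j, b_j] and σ_j = b_j - a_j. Given ε > 0, let k̄ be the smallest natural number with Σ_{k=k̄+1}^d σ_k ≤ ε/2, and let 𝒩 ∈ ℕ satisfy (1/𝒩)Σ_{k=1}^{k̄} σ_k ≤ ε/2. Then there exists an atomic probability measure μ^N supported on N = 𝒩^{k̄} points with W₁(μ, μ^N) ≤ ε. -/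
/-!
Quantize each coordinate separately. Since the CDF of `μ j` is continuous, there are quantiles
`a j ≤ q j 0 ≤ ⋯ ≤ q j (N j) ≤ b j` cutting `ℝ` into `N j` cells of mass `1 / N j`; sending `x` to
the grid point whose `j`-th coordinate is the left end of the cell containing `x j` pushes the
product measure forward to the uniform measure on the `∏ j, N j` grid points. This map moves the
`j`-th coordinate by at most the width of its cell, and the widths of the cells telescope to at
most `σ j`, so the mean displacement, which bounds `W1` through the Lipschitz dual, is at most
`∑ j, σ j / N j`. With `N j = 𝒩` for `j < kbar` and `N j = 1` otherwise this is `ε / 2 + ε / 2`.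
-/

open MeasureTheory Set

noncomputable section

open scoped ENNReal

section Wasserstein

variable {E : Type*} [MeasurableSpace E] [PseudoMetricSpace E]

theorem W1_le_of_forall_lipschitzWith {μ ν : Measure E} {c : ℝ}
    (h : ∀ ξ : E → ℝ, LipschitzWith 1 ξ → |∫ z, ξ z ∂μ - ∫ z, ξ z ∂ν| ≤ c) : W1 μ ν ≤ c := by
  refine csSup_le ⟨0, fun _ => 0, (LipschitzWith.const 0).weaken zero_le_one, by simp⟩ ?_
  rintro _ ⟨ξ, hξ, rfl⟩
  exact h ξ hξ

theorem W1_map_le_integral_dist [OpensMeasurableSpace E] {α : Type*} [MeasurableSpace α]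
    {μ : Measure α} [IsFiniteMeasure μ] {f g : α → E} (hf : AEMeasurable f μ)
    (hg : AEMeasurable g μ) (z : E) (hfz : Integrable (fun x => dist (f x) z) μ)
    (hfg : Integrable (fun x => dist (f x) (g x)) μ) :
    W1 (μ.map f) (μ.map g) ≤ ∫ x, dist (f x) (g x) ∂μ := by
  refine W1_le_of_forall_lipschitzWith fun ξ hξ => ?_
  have habs : ∀ u v, |ξ u - ξ v| ≤ dist u v := fun u v => by
    simpa [Real.dist_eq] using hξ.dist_le_mul u v
  have hξf : Integrable (fun x => ξ (f x)) μ :=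
    ((integrable_const |ξ z|).add hfz).mono'
      (hξ.continuous.measurable.comp_aemeasurable hf).aestronglyMeasurable
      (ae_of_all _ fun x => by
        have := habs (f x) z
        simp only [Pi.add_apply, Real.norm_eq_abs]
        linarith [abs_sub_abs_le_abs_sub (ξ (f x)) (ξ z)])
  have hξg : Integrable (fun x => ξ (g x)) μ :=
    (hξf.norm.add hfg).mono'
      (hξ.continuous.measurable.comp_aemeasurable hg).aestronglyMeasurable
      (ae_of_all _ fun x => by
        have := habs (f x) (g x)
        simp only [Pi.add_apply, Real.norm_eq_abs]
        linarith [abs_sub_abs_le_abs_sub (ξ (g x)) (ξ (f x)), abs_sub_comm (ξ (f x)) (ξ (g x))])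
  rw [integral_map hf hξ.continuous.aestronglyMeasurable,
    integral_map hg hξ.continuous.aestronglyMeasurable, ← integral_sub hξf hξg]
  calc |∫ x, ξ (f x) - ξ (g x) ∂μ| ≤ ∫ x, |ξ (f x) - ξ (g x)| ∂μ := abs_integral_le_integral_abs
    _ ≤ ∫ x, dist (f x) (g x) ∂μ :=
      integral_mono_of_nonneg (ae_of_all _ fun _ => abs_nonneg _) hfg
        (ae_of_all _ fun _ => habs _ _)

end Wasserstein

theorem exists_monotone_preimage_div {F : ℝ → ℝ} (hF : Continuous F) (hFm : Monotone F)
    {a b : ℝ} (ha : F a = 0) (hb : F b = 1) (N : ℕ) :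
    ∃ q : ℕ → ℝ, Monotone q ∧ (∀ i, q i ∈ Icc a b) ∧ ∀ i ≤ N, F (q i) = i / N := by
  have hab : a ≤ b := le_of_not_gt fun h => by linarith [hFm h.le]
  have hivt (i : ℕ) : ∃ t ∈ Icc a b, F t = (min i N : ℕ) / N :=
    intermediate_value_Icc hab hF.continuousOn <| by
      rw [ha, hb]
      exact ⟨by positivity, div_le_one_of_le₀ (by exact_mod_cast min_le_right i N) (by positivity)⟩
  choose g hgab hgF using hivt
  refine ⟨fun i => g (min i N), fun i j hij => ?_, fun i => hgab _, fun i hi => ?_⟩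
  · rcases (min_le_min_right N hij).lt_or_eq with hlt | heq
    · refine (hFm.reflect_lt ?_).le
      have hN : (0 : ℝ) < N := by
        exact_mod_cast (Nat.zero_le _).trans_lt (hlt.trans_le (min_le_right j N))
      simp only [hgF, Nat.min_eq_left (min_le_right _ N)]
      exact div_lt_div_of_pos_right (by exact_mod_cast hlt) hN
    · exact (congrArg g heq).le
  · simp [hgF, Nat.min_eq_left hi]

section SupportedMeasure

variable {ν : Measure ℝ} [IsProbabilityMeasure ν] {a b : ℝ}

theorem measureReal_Iic_eq_one_of_compl_Icc (hsupp : ν (Icc a b)ᶜ = 0) : ν.real (Iic b) = 1 := by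
  have : ν (Iic b)ᶜ = 0 := measure_mono_null (fun s (hs : s ∈ (Iic b)ᶜ) => by
    rw [compl_Iic, mem_Ioi] at hs
    simp only [mem_compl_iff, mem_Icc, not_and_or, not_le]
    exact Or.inr hs) hsupp
  simp [measureReal_def, (prob_compl_eq_zero_iff measurableSet_Iic).1 this]

theorem measureReal_Iic_eq_zero_of_compl_Icc (hsupp : ν (Icc a b)ᶜ = 0)
    (hcdf : Continuous fun t => ν.real (Iic t)) : ν.real (Iic a) = 0 := by
  have hlt : Iio a ⊆ {t | ν.real (Iic t) ≤ 0} := fun t (ht : t < a) =>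
    ((measureReal_eq_zero_iff).2 (measure_mono_null (fun s (hs : s ≤ t) => by
      simp only [mem_compl_iff, mem_Icc, not_and_or, not_le]
      exact Or.inl (hs.trans_lt ht)) hsupp)).le
  have ha : a ∈ closure (Iio a) := by rw [closure_Iio]; exact mem_Iic.2 le_rfl
  exact le_antisymm ((isClosed_le hcdf continuous_const).closure_subset_iff.2 hlt ha)
    measureReal_nonneg

theorem exists_monotone_quantiles (hsupp : ν (Icc a b)ᶜ = 0)
    (hcdf : Continuous fun t => ν.real (Iic t)) (N : ℕ) :
    ∃ q : ℕ → ℝ, Monotone q ∧ (∀ i, q i ∈ Icc a b) ∧ ∀ i ≤ N, ν.real (Iic (q i)) = i / N :=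
  exists_monotone_preimage_div hcdf (fun _ _ hst => measureReal_mono (Iic_subset_Iic.2 hst))
    (measureReal_Iic_eq_zero_of_compl_Icc hsupp hcdf) (measureReal_Iic_eq_one_of_compl_Icc hsupp) N

end SupportedMeasure

section QuantileCells

variable {q : ℕ → ℝ} {N : ℕ} [NeZero N] {t : ℝ}

/-- For monotone `q`, the index `i` of the cell `(q i, q (i + 1)]` containing `t`; the two
extreme cells are unbounded. -/
def cellIndex (q : ℕ → ℝ) (N : ℕ) [NeZero N] (t : ℝ) : Fin N :=
  (Finset.univ.filter fun i : Fin N => q i < t).sup id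

def cellWidth (q : ℕ → ℝ) (i : ℕ) : ℝ := q (i + 1) - q i

theorem le_cellIndex_iff (hq : Monotone q) {i : Fin N} (hi : i ≠ 0) :
    i ≤ cellIndex q N t ↔ q i < t := by
  rw [cellIndex, Finset.le_sup_iff (by rwa [bot_lt_iff_ne_bot, bot_eq_zero])]
  simp only [Finset.mem_filter, Finset.mem_univ, true_and, id]
  exact ⟨fun ⟨k, hk, hik⟩ => (hq hik).trans_lt hk, fun h => ⟨i, h, le_rfl⟩⟩

theorem monotone_cellIndex : Monotone (cellIndex q N) := fun _ _ hst =>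
  Finset.sup_mono fun i => by
    simp only [Finset.mem_filter, Finset.mem_univ, true_and]
    exact fun h => h.trans_le hst

theorem measurable_cellIndex : Measurable (cellIndex q N) := monotone_cellIndex.measurable

theorem q_cellIndex_lt (hq : Monotone q) (ht : q 0 < t) : q (cellIndex q N t) < t := by
  by_cases h : cellIndex q N t = 0
  · rwa [h, Fin.val_zero]
  · exact (le_cellIndex_iff hq h).1 le_rfl

theorem le_q_cellIndex_succ (hq : Monotone q) (ht : t ≤ q N) :
    t ≤ q (cellIndex q N t + 1) := by
  by_cases h : (cellIndex q N t : ℕ) + 1 < N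
  · refine not_lt.1 fun hlt => ?_
    have := (le_cellIndex_iff hq (i := ⟨_, h⟩) (Fin.ne_of_val_ne (by simp))).2 hlt
    exact this.not_gt (Nat.lt_succ_self _)
  · rwa [show (cellIndex q N t : ℕ) + 1 = N by omega]

variable (ν : Measure ℝ) [IsProbabilityMeasure ν]

theorem measureReal_cellIndex_lt (hq : Monotone q)
    (hν : ∀ i ≤ N, ν.real (Iic (q i)) = i / N) {k : ℕ} (hk : k ≤ N) :
    ν.real {t | (cellIndex q N t : ℕ) < k} = k / N := by
  rcases Nat.eq_zero_or_pos k with rfl | hk0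
  · simp
  rcases hk.lt_or_eq with hkN | hkN
  · have : {t | (cellIndex q N t : ℕ) < k} = Iic (q k) := by
      ext t
      have := (le_cellIndex_iff hq (t := t) (i := ⟨k, hkN⟩)
        (Fin.ne_of_val_ne (by simpa using hk0.ne'))).not
      rw [not_le, not_lt] at this
      exact this
    rw [this, hν k hk]
  · simp [hkN, NeZero.ne N]

theorem measure_cellIndex_preimage_singleton (hq : Monotone q)
    (hν : ∀ i ≤ N, ν.real (Iic (q i)) = i / N) (i : Fin N) :
    ν (cellIndex q N ⁻¹' {i}) = (N : ℝ≥0∞)⁻¹ := by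
  have hdiff : cellIndex q N ⁻¹' {i} =
      {t | (cellIndex q N t : ℕ) < i + 1} \ {t | (cellIndex q N t : ℕ) < i} := by
    ext t
    simp only [mem_preimage, mem_singleton_iff, Fin.ext_iff, mem_sdiff, mem_ofPred_eq]
    omega
  have hsub : {t | (cellIndex q N t : ℕ) < i} ⊆ {t | (cellIndex q N t : ℕ) < i + 1} :=
    fun t (ht : _ < _) => Nat.lt_succ_of_lt ht
  have hmeas : MeasurableSet {t | (cellIndex q N t : ℕ) < i} :=
    measurable_cellIndex (MeasurableSet.of_discrete (s := {c : Fin N | (c : ℕ) < i}))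
  rw [← ofReal_measureReal, hdiff, measureReal_sdiff hsub hmeas,
    measureReal_cellIndex_lt ν hq hν i.2, measureReal_cellIndex_lt ν hq hν i.2.le]
  have hN : (0 : ℝ) < N := by exact_mod_cast NeZero.pos N
  rw [show ((i : ℕ) + 1 : ℕ) / (N : ℝ) - (i : ℕ) / N = (N : ℝ)⁻¹ by push_cast; field_simp; ring,
    ENNReal.ofReal_inv_of_pos hN, ENNReal.ofReal_natCast]

theorem ae_abs_sub_q_cellIndex_le (hq : Monotone q) (hν : ∀ i ≤ N, ν.real (Iic (q i)) = i / N) :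
    ∀ᵐ t ∂ν, |t - q (cellIndex q N t)| ≤ cellWidth q (cellIndex q N t) := by
  have h0 : ∀ᵐ t ∂ν, q 0 < t := by
    rw [ae_iff]
    have := hν 0 (Nat.zero_le N)
    rw [Nat.cast_zero, zero_div, measureReal_eq_zero_iff] at this
    simp only [not_lt]
    exact this
  have hN : ∀ᵐ t ∂ν, t ≤ q N := by
    have hqN : ν (Iic (q N)) = 1 := by
      rw [← ENNReal.toReal_eq_one_iff, ← measureReal_def, hν N le_rfl, div_self (NeZero.ne _)]
    rw [ae_iff]
    exact (prob_compl_eq_zero_iff measurableSet_Iic).2 hqN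
  filter_upwards [h0, hN] with t ht0 htN
  have := q_cellIndex_lt (N := N) hq ht0
  rw [abs_of_pos (sub_pos.2 this), cellWidth]
  linarith [le_q_cellIndex_succ (N := N) hq htN]

theorem integral_cellWidth_cellIndex (hq : Monotone q)
    (hν : ∀ i ≤ N, ν.real (Iic (q i)) = i / N) :
    ∫ t, cellWidth q (cellIndex q N t) ∂ν = (q N - q 0) / N := by
  let w (i : Fin N) : ℝ := cellWidth q i
  calc ∫ t, w (cellIndex q N t) ∂ν = ∫ i, w i ∂ν.map (cellIndex q N) :=
        (integral_map measurable_cellIndex.aemeasurable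
          (measurable_of_finite w).aestronglyMeasurable).symm
    _ = ∑ i : Fin N, (N : ℝ)⁻¹ * w i := by
        rw [integral_fintype Integrable.of_finite]
        refine Finset.sum_congr rfl fun i _ => ?_
        rw [measureReal_def, Measure.map_apply measurable_cellIndex (measurableSet_singleton i),
          measure_cellIndex_preimage_singleton ν hq hν, ENNReal.toReal_inv, ENNReal.toReal_natCast,
          smul_eq_mul]
    _ = (q N - q 0) / N := by
        rw [← Finset.mul_sum, Fin.sum_univ_eq_sum_range (cellWidth q), inv_mul_eq_div]
        exact congrArg (· / (N : ℝ)) (Finset.sum_range_sub q N)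

end QuantileCells

theorem dist_euclideanEquiv_symm_le_sum {ι : Type*} [Fintype ι] (x y : ι → ℝ) :
    dist ((EuclideanSpace.equiv ι ℝ).symm x) ((EuclideanSpace.equiv ι ℝ).symm y) ≤
      ∑ j, |x j - y j| := by
  rw [EuclideanSpace.dist_eq, ← Real.sqrt_sq (Finset.sum_nonneg fun j _ => abs_nonneg (x j - y j))]
  gcongr
  simpa [Real.dist_eq] using
    Finset.sum_sq_le_sq_sum_of_nonneg fun j _ => abs_nonneg (x j - y j)

theorem Continuous.integrable_of_ae_mem_compact {X E : Type*} [TopologicalSpace X] [T2Space X]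
    [MeasurableSpace X] [OpensMeasurableSpace X] [NormedAddCommGroup E] {μ : Measure X}
    [IsFiniteMeasureOnCompacts μ] {K : Set X} (hK : IsCompact K) (hμK : ∀ᵐ x ∂μ, x ∈ K)
    {f : X → E} (hf : Continuous f) : Integrable f μ := by
  rw [← Measure.restrict_eq_self_of_ae_mem hμK]
  exact hf.continuousOn.integrableOn_compact hK

theorem eq_smul_sum_dirac_of_measure_singleton {α : Type*} [Fintype α] [MeasurableSpace α]
    [MeasurableSingletonClass α] {ρ : Measure α} {c : ℝ≥0∞} (h : ∀ a, ρ {a} = c) :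
    ρ = c • ∑ a, Measure.dirac a :=
  Measure.ext_iff_singleton.2 fun a => by
    rw [Measure.smul_apply, ← Measure.sum_fintype, ← Measure.count]
    simp [h]

section Grid

variable {ι : Type*} {q : ι → ℕ → ℝ} {N : ι → ℕ} [∀ j, NeZero (N j)]

def gridIndex (q : ι → ℕ → ℝ) (N : ι → ℕ) [∀ j, NeZero (N j)] (x : ι → ℝ) (j : ι) :
    Fin (N j) :=
  cellIndex (q j) (N j) (x j)

def gridPoint (q : ι → ℕ → ℝ) (c : ∀ j, Fin (N j)) : EuclideanSpace ℝ ι :=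
  (EuclideanSpace.equiv ι ℝ).symm fun j => q j (c j)

theorem measurable_gridIndex : Measurable (gridIndex q N) :=
  measurable_pi_lambda _ fun j => measurable_cellIndex.comp (measurable_pi_apply j)

variable [Fintype ι] (μ : ι → Measure ℝ) [∀ j, IsProbabilityMeasure (μ j)]

theorem map_pi_gridIndex [DecidableEq ι] (hq : ∀ j, Monotone (q j))
    (hν : ∀ j, ∀ i ≤ N j, (μ j).real (Iic (q j i)) = i / N j) :
    (Measure.pi μ).map (gridIndex q N) =
      (Fintype.card (∀ j, Fin (N j)) : ℝ≥0∞)⁻¹ • ∑ c, Measure.dirac c := by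
  refine eq_smul_sum_dirac_of_measure_singleton fun c => ?_
  have hpre : gridIndex q N ⁻¹' {c} = univ.pi fun j => cellIndex (q j) (N j) ⁻¹' {c j} := by
    ext x
    simp [gridIndex, funext_iff]
  rw [Measure.map_apply measurable_gridIndex (measurableSet_singleton c), hpre, Measure.pi_pi,
    Fintype.card_pi]
  simp_rw [measure_cellIndex_preimage_singleton (μ _) (hq _) (hν _)]
  simp only [Fintype.card_fin, Nat.cast_prod]
  exact (ENNReal.prod_inv_distrib fun j _ k _ _ => Or.inl (by simp [NeZero.ne (N j)])).symm

theorem map_pi_gridPoint_comp_gridIndex [DecidableEq ι] (hq : ∀ j, Monotone (q j))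
    (hν : ∀ j, ∀ i ≤ N j, (μ j).real (Iic (q j i)) = i / N j) :
    (Measure.pi μ).map (gridPoint q ∘ gridIndex q N) =
      (Fintype.card (∀ j, Fin (N j)) : ℝ≥0∞)⁻¹ •
        ∑ c : ∀ j, Fin (N j), Measure.dirac (gridPoint q c) := by
  rw [← Measure.map_map (measurable_of_finite _) measurable_gridIndex, map_pi_gridIndex μ hq hν,
    Measure.map_smul, Measure.map_finset_sum' (measurable_of_finite _).aemeasurable]
  simp [Measure.map_dirac' (measurable_of_finite (gridPoint q))]

theorem ae_dist_gridPoint_le (hq : ∀ j, Monotone (q j))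
    (hν : ∀ j, ∀ i ≤ N j, (μ j).real (Iic (q j i)) = i / N j) :
    ∀ᵐ x ∂Measure.pi μ, dist ((EuclideanSpace.equiv ι ℝ).symm x) (gridPoint q (gridIndex q N x)) ≤
      ∑ j, cellWidth (q j) (gridIndex q N x j) := by
  have hcoord : ∀ᵐ x ∂Measure.pi μ, ∀ j,
      |x j - q j (gridIndex q N x j)| ≤ cellWidth (q j) (gridIndex q N x j) :=
    ae_all_iff.2 fun j => (measurePreserving_eval μ j).quasiMeasurePreserving.ae
      (ae_abs_sub_q_cellIndex_le (μ j) (hq j) (hν j))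
  filter_upwards [hcoord] with x hx
  exact (dist_euclideanEquiv_symm_le_sum _ _).trans (Finset.sum_le_sum fun j _ => hx j)

theorem integrable_sum_cellWidth_gridIndex :
    Integrable (fun x => ∑ j, cellWidth (q j) (gridIndex q N x j)) (Measure.pi μ) :=
  Integrable.of_finite.comp_measurable
    (g := fun c : ∀ j, Fin (N j) => ∑ j, cellWidth (q j) (c j)) measurable_gridIndex

theorem integral_sum_cellWidth_gridIndex (hq : ∀ j, Monotone (q j))
    (hν : ∀ j, ∀ i ≤ N j, (μ j).real (Iic (q j i)) = i / N j) :
    ∫ x, ∑ j, cellWidth (q j) (gridIndex q N x j) ∂Measure.pi μ =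
      ∑ j, (q j (N j) - q j 0) / N j := by
  have hmeas (j : ι) : Measurable fun t => cellWidth (q j) (cellIndex (q j) (N j) t) :=
    (measurable_of_finite fun i : Fin (N j) => cellWidth (q j) i).comp measurable_cellIndex
  rw [integral_finsetSum _ fun j _ => ?_]
  · refine Finset.sum_congr rfl fun j _ => ?_
    rw [← integral_cellWidth_cellIndex (μ j) (hq j) (hν j), ← (measurePreserving_eval μ j).map_eq,
      integral_map (measurable_pi_apply j).aemeasurable (hmeas j).aestronglyMeasurable]
    rfl
  · exact Integrable.of_finite.comp_measurable
      (g := fun c : ∀ j, Fin (N j) => cellWidth (q j) (c j)) measurable_gridIndex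

end Grid

theorem exists_W1_map_pi_gridPoint_le {ι : Type*} [Fintype ι] [DecidableEq ι]
    (μ : ι → Measure ℝ) [∀ j, IsProbabilityMeasure (μ j)] (a b : ι → ℝ)
    (hsupp : ∀ j, μ j (Icc (a j) (b j))ᶜ = 0)
    (hcdf : ∀ j, Continuous fun t => (μ j).real (Iic t)) (N : ι → ℕ) [∀ j, NeZero (N j)] :
    ∃ pts : (∀ j, Fin (N j)) → EuclideanSpace ℝ ι,
      W1 ((Measure.pi μ).map (EuclideanSpace.equiv ι ℝ).symm)
        ((Fintype.card (∀ j, Fin (N j)) : ℝ≥0∞)⁻¹ • ∑ c, Measure.dirac (pts c)) ≤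
      ∑ j, (b j - a j) / N j := by
  choose q hqm hqab hqν using fun j => exists_monotone_quantiles (hsupp j) (hcdf j) (N j)
  refine ⟨gridPoint q, ?_⟩
  set e := (EuclideanSpace.equiv ι ℝ).symm
  have hmeas : Measurable (gridPoint q ∘ gridIndex q N) :=
    (measurable_of_finite _).comp measurable_gridIndex
  have hbox : ∀ᵐ x ∂Measure.pi μ, x ∈ univ.pi fun j => Icc (a j) (b j) := by
    filter_upwards [ae_all_iff.2 fun j => (measurePreserving_eval μ j).quasiMeasurePreserving.ae
      (mem_ae_iff.2 (hsupp j))] with x hx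
    exact mem_univ_pi.2 hx
  have hdist := ae_dist_gridPoint_le μ hqm hqν
  have hint : Integrable (fun x => dist (e x) (gridPoint q (gridIndex q N x))) (Measure.pi μ) :=
    (integrable_sum_cellWidth_gridIndex μ).mono'
      (e.continuous.measurable.dist hmeas).aestronglyMeasurable
      (by simpa only [Real.norm_of_nonneg dist_nonneg] using hdist)
  rw [← map_pi_gridPoint_comp_gridIndex μ hqm hqν]
  calc W1 _ _ ≤ ∫ x, dist (e x) (gridPoint q (gridIndex q N x)) ∂Measure.pi μ :=
        W1_map_le_integral_dist e.continuous.aemeasurable hmeas.aemeasurable 0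
          ((e.continuous.dist continuous_const).integrable_of_ae_mem_compact
            (isCompact_univ_pi fun j => isCompact_Icc) hbox) hint
    _ ≤ ∫ x, ∑ j, cellWidth (q j) (gridIndex q N x j) ∂Measure.pi μ :=
        integral_mono_ae hint (integrable_sum_cellWidth_gridIndex μ) hdist
    _ = ∑ j, (q j (N j) - q j 0) / N j := integral_sum_cellWidth_gridIndex μ hqm hqν
    _ ≤ ∑ j, (b j - a j) / N j := Finset.sum_le_sum fun j _ => div_le_div_of_nonneg_right
        (by linarith [(hqab j (N j)).2, (hqab j 0).1]) (Nat.cast_nonneg _)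

theorem stmt_13_general {d : ℕ}
    (μ : Fin d → Measure ℝ) [∀ j, IsProbabilityMeasure (μ j)]
    (a b : Fin d → ℝ)
    (hsupp : ∀ j, (μ j) (Icc (a j) (b j))ᶜ = 0)
    (σ : Fin d → ℝ) (hσdef : ∀ j, σ j = b j - a j)
    (hcdf : ∀ j, Continuous fun t => ((μ j) (Iic t)).toReal)
    (ε : ℝ)
    (kbar : ℕ) (hkbar : kbar ≤ d)
    -- kbar is the smallest natural number such that the tail sum is at most ε/2
    (htail : ∑ j ∈ Finset.univ.filter (fun j : Fin d => kbar ≤ (j : ℕ)), σ j ≤ ε / 2)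
    (𝒩 : ℕ) (h𝒩pos : 0 < 𝒩)
    (h𝒩 : (1 / (𝒩 : ℝ)) * ∑ j ∈ Finset.univ.filter (fun j : Fin d => (j : ℕ) < kbar), σ j ≤ ε / 2) :
    ∃ pts : Fin (𝒩 ^ kbar) → EuclideanSpace ℝ (Fin d),
      W1 ((Measure.pi μ : Measure (Fin d → ℝ)).map (EuclideanSpace.equiv (Fin d) ℝ).symm)
        (((𝒩 : ENNReal) ^ kbar)⁻¹ • ∑ i, Measure.dirac (pts i)) ≤ ε := by
  set N : Fin d → ℕ := fun j => if (j : ℕ) < kbar then 𝒩 else 1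
  have : ∀ j, NeZero (N j) := fun j => ⟨by simp only [N]; split_ifs <;> omega⟩
  have hcard : Fintype.card (∀ j, Fin (N j)) = 𝒩 ^ kbar := by
    simp [Fintype.card_pi, N, Finset.prod_ite, Fin.card_filter_val_lt, hkbar]
  obtain ⟨pts, hpts⟩ := exists_W1_map_pi_gridPoint_le μ a b hsupp hcdf N
  let e := (Fintype.equivFinOfCardEq hcard).symm
  refine ⟨pts ∘ e, ?_⟩
  rw [Function.comp_def, e.sum_comp (fun c => Measure.dirac (pts c)), ← Nat.cast_pow, ← hcard]
  refine hpts.trans ?_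
  have hsplit : ∑ j, (b j - a j) / (N j : ℝ) =
      (1 / (𝒩 : ℝ)) * ∑ j ∈ Finset.univ.filter (fun j : Fin d => (j : ℕ) < kbar), σ j +
        ∑ j ∈ Finset.univ.filter (fun j : Fin d => kbar ≤ (j : ℕ)), σ j := by
    rw [← Finset.sum_filter_add_sum_filter_not Finset.univ (fun j : Fin d => (j : ℕ) < kbar),
      Finset.mul_sum]
    simp only [not_lt]
    congr 1 <;> refine Finset.sum_congr rfl fun j hj => ?_ <;>
      simp only [Finset.mem_filter, Finset.mem_univ, true_and] at hj
    · simp [N, hj, hσdef, div_eq_inv_mul]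
    · simp [N, hj.not_gt, hσdef]
  linarith

theorem stmt_13 {d : ℕ}
    (μ : Fin d → Measure ℝ) [∀ j, IsProbabilityMeasure (μ j)]
    (a b : Fin d → ℝ)
    (hsupp : ∀ j, (μ j) (Icc (a j) (b j))ᶜ = 0)
    (σ : Fin d → ℝ) (hσdef : ∀ j, σ j = b j - a j)
    (hσpos : ∀ j, 0 < σ j)
    (hσmono : ∀ j l : Fin d, j ≤ l → σ l ≤ σ j)
    (hcdf : ∀ j, Continuous fun t => ((μ j) (Iic t)).toReal)
    (ε : ℝ) (hε : 0 < ε)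
    (kbar : ℕ) (hkbar : kbar ≤ d)
    -- kbar is the smallest natural number such that the tail sum is at most ε/2
    (htail : ∑ j ∈ Finset.univ.filter (fun j : Fin d => kbar ≤ (j : ℕ)), σ j ≤ ε / 2)
    (hmin : ∀ m < kbar, ¬ (∑ j ∈ Finset.univ.filter (fun j : Fin d => m ≤ (j : ℕ)), σ j ≤ ε / 2))
    (𝒩 : ℕ) (h𝒩pos : 0 < 𝒩)
    (h𝒩 : (1 / (𝒩 : ℝ)) * ∑ j ∈ Finset.univ.filter (fun j : Fin d => (j : ℕ) < kbar), σ j ≤ ε / 2) :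
    ∃ pts : Fin (𝒩 ^ kbar) → EuclideanSpace ℝ (Fin d),
      W1 ((Measure.pi μ : Measure (Fin d → ℝ)).map (EuclideanSpace.equiv (Fin d) ℝ).symm)
        (((𝒩 : ENNReal) ^ kbar)⁻¹ • ∑ i, Measure.dirac (pts i)) ≤ ε :=
  stmt_13_general μ a b hsupp σ hσdef hcdf ε kbar hkbar htail 𝒩 h𝒩pos h𝒩
end
end

section
/- Let x : [0,T] → (ℝ^d)^N solve ẋ_i = f_i(𝒟x) + Σ_j f_{ij}(𝒟x)x_j with x_i(0) = x_i^0, and let y : [0,T] → (ℝ^k)^N solve ẏ_i = M f_i(𝒟'y) + Σ_j f_{ij}(𝒟'y)y_j with y_i(0) = M x_i^0, where M ∈ ℝ^{k×d}. Assume: (a) the Lipschitz/boundedness conditions |f_i(a)-f_i(b)| ≤ L‖a-b‖_∞, Σ_j|f_{ij}(a)| ≤ L', Σ_j|f_{ij}(a)-f_{ij}(b)| ≤ L''‖a-b‖_∞; (b) max_{t,i,j} ‖x_i(t)-x_j(t)‖₂ ≤ α; (c) (1-ε)‖x_i(t)-x_j(t)‖₂ ≤ ‖Mx_i(t)-Mx_j(t)‖₂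 ≤ (1+ε)‖x_i(t)-x_j(t)‖₂ for all t, i, j; and (d) max_t max_i ‖y_i(t)‖₂ ≤ β. Then ℰ(t) = max_i ‖y_i(t) - M x_i(t)‖₂ satisfies ℰ(t) ≤ ε·α·t·(L‖M‖ + L''β)·exp((2L‖M‖ + 2βL'' + L')·t) for all t ∈ [0,T]. -/
open Set Real

noncomputable section

/-!
The error `Z = y - M x` vanishes at `0` and satisfies `‖Z'‖ ≤ K ‖Z‖ + c` with
`K = 2L‖M‖ + 2βL'' + L'` and `c = εα(L‖M‖ + L''β)`: going through the configuration `M x`,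
the adjacency matrices of `y` and `x` differ entrywise by at most `2‖Z‖ + εα`, and the Lipschitz
conditions turn this into the differential inequality. Grönwall's inequality then gives
`‖Z t‖ ≤ c/K (exp (K t) - 1) ≤ c t exp (K t)`.
-/

lemma matSup_le {N : ℕ} {A : Matrix (Fin N) (Fin N) ℝ} {c : ℝ} (hc : 0 ≤ c)
    (h : ∀ i j, |A i j| ≤ c) : matSup A ≤ c :=
  Real.iSup_le (fun i => Real.iSup_le (h i) hc) hc

lemma exp_sub_one_le_mul_exp (s : ℝ) : exp s - 1 ≤ s * exp s := by
  have h := mul_le_mul_of_nonneg_right (one_sub_le_exp_neg s) (exp_pos s).le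
  rw [← exp_add, neg_add_cancel, exp_zero] at h
  linarith

lemma gronwallBound_zero_le {K c : ℝ} (hK : 0 ≤ K) (hc : 0 ≤ c) (t : ℝ) :
    gronwallBound 0 K c t ≤ c * t * exp (K * t) := by
  rcases hK.eq_or_lt with rfl | hK
  · simp [gronwallBound_K0]
  · simp only [gronwallBound_of_K_ne_0 hK.ne', zero_mul, zero_add]
    calc c / K * (exp (K * t) - 1) ≤ c / K * (K * t * exp (K * t)) := by
          gcongr; exact exp_sub_one_le_mul_exp _
      _ = c * t * exp (K * t) := by field_simp

lemma matSup_adjMat_sub_le {N m n : ℕ} (u : Fin N → EuclideanSpace ℝ (Fin m))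
    (v : Fin N → EuclideanSpace ℝ (Fin n))
    (g : EuclideanSpace ℝ (Fin n) → EuclideanSpace ℝ (Fin m)) {ε α : ℝ} (hε : 0 ≤ ε)
    (hα : 0 ≤ α) (hv : ∀ i j, ‖v i - v j‖ ≤ α)
    (hg : ∀ i j, (1 - ε) * ‖v i - v j‖ ≤ ‖g (v i) - g (v j)‖ ∧
      ‖g (v i) - g (v j)‖ ≤ (1 + ε) * ‖v i - v j‖) :
    matSup (adjMat u - adjMat v) ≤ 2 * ‖fun i => u i - g (v i)‖ + ε * α := by
  refine matSup_le (by positivity) fun i j => ?_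
  have hu : |‖u i - u j‖ - ‖g (v i) - g (v j)‖| ≤ ‖u i - g (v i)‖ + ‖u j - g (v j)‖ := by
    simpa only [dist_eq_norm, Real.norm_eq_abs] using
      dist_dist_dist_le (u i) (u j) (g (v i)) (g (v j))
  have hgij : |‖g (v i) - g (v j)‖ - ‖v i - v j‖| ≤ ε * ‖v i - v j‖ := by
    rw [abs_le]; constructor <;> linarith [hg i j]
  have hi := norm_le_pi_norm (fun i => u i - g (v i)) i
  have hj := norm_le_pi_norm (fun i => u i - g (v i)) j
  have hεv := mul_le_mul_of_nonneg_left (hv i j) hε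
  calc |(adjMat u - adjMat v) i j|
      ≤ |‖u i - u j‖ - ‖g (v i) - g (v j)‖| + |‖g (v i) - g (v j)‖ - ‖v i - v j‖| :=
        abs_sub_le _ _ _
    _ ≤ 2 * ‖fun i => u i - g (v i)‖ + ε * α := by linarith

lemma norm_sum_smul_le {ι E : Type*} [Fintype ι] [SeminormedAddCommGroup E] [NormedSpace ℝ E]
    (c : ι → ℝ) (w : ι → E) {B : ℝ} (hw : ∀ j, ‖w j‖ ≤ B) :
    ‖∑ j, c j • w j‖ ≤ (∑ j, |c j|) * B := by
  rw [Finset.sum_mul]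
  refine (norm_sum_le _ _).trans (Finset.sum_le_sum fun j _ => ?_)
  rw [norm_smul, Real.norm_eq_abs]
  exact mul_le_mul_of_nonneg_left (hw j) (abs_nonneg _)

lemma norm_interaction_sub_le {ι A E V : Type*} [Fintype ι] [NormedAddCommGroup E]
    [NormedSpace ℝ E] [NormedAddCommGroup V] [NormedSpace ℝ V] (M : E →L[ℝ] V) (g : A → E)
    (F : ι → A → ℝ) (a b : A) (u : ι → V) (v : ι → E) {L L' L'' β δ : ℝ} (hβ : 0 ≤ β)
    (hg : ‖g a - g b‖ ≤ L * δ) (hF : ∑ j, |F j b| ≤ L')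
    (hFsub : ∑ j, |F j a - F j b| ≤ L'' * δ) (hu : ∀ j, ‖u j‖ ≤ β) :
    ‖(M (g a) + ∑ j, F j a • u j) - M (g b + ∑ j, F j b • v j)‖ ≤
      ‖M‖ * (L * δ) + L'' * δ * β + L' * ‖fun j => u j - M (v j)‖ := by
  have hsplit : (M (g a) + ∑ j, F j a • u j) - M (g b + ∑ j, F j b • v j) =
      M (g a - g b) + ∑ j, (F j a - F j b) • u j + ∑ j, F j b • (u j - M (v j)) := by
    simp only [map_add, map_sub, map_sum, map_smul, sub_smul, smul_sub, Finset.sum_sub_distrib]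
    abel
  have hM : ‖M (g a - g b)‖ ≤ ‖M‖ * (L * δ) :=
    (M.le_opNorm _).trans (mul_le_mul_of_nonneg_left hg (norm_nonneg M))
  have hFu : ‖∑ j, (F j a - F j b) • u j‖ ≤ L'' * δ * β :=
    (norm_sum_smul_le _ _ hu).trans (mul_le_mul_of_nonneg_right hFsub hβ)
  have hFv : ‖∑ j, F j b • (u j - M (v j))‖ ≤ L' * ‖fun j => u j - M (v j)‖ :=
    (norm_sum_smul_le _ _ (norm_le_pi_norm (fun j => u j - M (v j)))).trans
      (mul_le_mul_of_nonneg_right hF (norm_nonneg _))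
  rw [hsplit]
  exact norm_add₃_le.trans (by linarith)

theorem stmt_14_general {N d k : ℕ} (T : ℝ)
    (f : Fin N → Matrix (Fin N) (Fin N) ℝ → EuclideanSpace ℝ (Fin d))
    (F : Fin N → Fin N → Matrix (Fin N) (Fin N) ℝ → ℝ)
    (M : EuclideanSpace ℝ (Fin d) →L[ℝ] EuclideanSpace ℝ (Fin k))
    (x : ℝ → Fin N → EuclideanSpace ℝ (Fin d))
    (y : ℝ → Fin N → EuclideanSpace ℝ (Fin k))
    (ε α β L L' L'' : ℝ)
    (hε : 0 < ε) (hα : 0 < α) (hβ : 0 < β)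
    (hLpos : 0 < L) (hL'pos : 0 < L') (hL''pos : 0 < L'')
    -- the dynamical systems
    (hx : ∀ t ∈ Icc (0 : ℝ) T, ∀ i, HasDerivAt (fun s => x s i)
      (f i (adjMat (x t)) + ∑ j, F i j (adjMat (x t)) • x t j) t)
    (hy0 : ∀ i, y 0 i = M (x 0 i))
    (hy : ∀ t ∈ Icc (0 : ℝ) T, ∀ i, HasDerivAt (fun s => y s i)
      (M (f i (adjMat (y t))) + ∑ j, F i j (adjMat (y t)) • y t j) t)
    -- (a) Lipschitz/boundedness conditions
    (hfLip : ∀ i a b, ‖f i a - f i b‖ ≤ L * matSup (a - b))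
    (hFbd : ∀ i a, ∑ j, |F i j a| ≤ L')
    (hFLip : ∀ i a b, ∑ j, |F i j a - F i j b| ≤ L'' * matSup (a - b))
    -- (b) a priori bound on mutual distances
    (hbd : ∀ t ∈ Icc (0 : ℝ) T, ∀ i j, ‖x t i - x t j‖ ≤ α)
    -- (c) quasi-isometry of M along the trajectories
    (hM : ∀ t ∈ Icc (0 : ℝ) T, ∀ i j,
      (1 - ε) * ‖x t i - x t j‖ ≤ ‖M (x t i) - M (x t j)‖ ∧
      ‖M (x t i) - M (x t j)‖ ≤ (1 + ε) * ‖x t i - x t j‖)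
    -- (d) a priori bound on the projected trajectories
    (hybd : ∀ t ∈ Icc (0 : ℝ) T, ∀ i, ‖y t i‖ ≤ β) :
    ∀ t ∈ Icc (0 : ℝ) T, (⨆ i, ‖y t i - M (x t i)‖) ≤
      ε * α * t * (L * ‖M‖ + L'' * β) *
        Real.exp ((2 * L * ‖M‖ + 2 * β * L'' + L') * t) := by
  set K := 2 * L * ‖M‖ + 2 * β * L'' + L'
  set c := ε * α * (L * ‖M‖ + L'' * β)
  set Z : ℝ → Fin N → EuclideanSpace ℝ (Fin k) := fun s i => y s i - M (x s i)
  set Z' : ℝ → Fin N → EuclideanSpace ℝ (Fin k) := fun t i =>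
    (M (f i (adjMat (y t))) + ∑ j, F i j (adjMat (y t)) • y t j) -
      M (f i (adjMat (x t)) + ∑ j, F i j (adjMat (x t)) • x t j)
  have hZ : ∀ t ∈ Icc 0 T, HasDerivAt Z (Z' t) t := fun t ht =>
    hasDerivAt_pi.2 fun i => (hy t ht i).sub (M.hasFDerivAt.comp_hasDerivAt t (hx t ht i))
  have hZ' : ∀ t ∈ Icc 0 T, ‖Z' t‖ ≤ K * ‖Z t‖ + c := by
    intro t ht
    have hS := matSup_adjMat_sub_le (y t) (x t) M hε.le hα.le (hbd t ht) (hM t ht)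
    have hS' := mul_le_mul_of_nonneg_left hS (by positivity : 0 ≤ ‖M‖ * L + L'' * β)
    refine (pi_norm_le_iff_of_nonneg (by positivity)).2 fun i => ?_
    refine (norm_interaction_sub_le M (f i) (F i) _ _ (y t) (x t) hβ.le (hfLip i _ _)
      (hFbd i _) (hFLip i _ _) (hybd t ht)).trans ?_
    linarith
  have hZ0 : ‖Z 0‖ ≤ 0 := norm_le_zero_iff.2 (funext fun i => sub_eq_zero.2 (hy0 i))
  intro t ht
  have hgron := norm_le_gronwallBound_of_norm_deriv_right_le
    (fun s hs => (hZ s hs).continuousAt.continuousWithinAt)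
    (fun s hs => (hZ s (Ico_subset_Icc_self hs)).hasDerivWithinAt) hZ0
    (fun s hs => hZ' s (Ico_subset_Icc_self hs)) t ht
  rw [sub_zero] at hgron
  have ht0 : 0 ≤ t := ht.1
  refine Real.iSup_le (fun i => (norm_le_pi_norm (Z t) i).trans <| hgron.trans <|
    (gronwallBound_zero_le (by positivity) (by positivity) t).trans_eq (by ring)) (by positivity)

theorem stmt_14 {N d k : ℕ} (T : ℝ) (hT : 0 < T)
    (f : Fin N → Matrix (Fin N) (Fin N) ℝ → EuclideanSpace ℝ (Fin d))
    (F : Fin N → Fin N → Matrix (Fin N) (Fin N) ℝ → ℝ)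
    (M : EuclideanSpace ℝ (Fin d) →L[ℝ] EuclideanSpace ℝ (Fin k))
    (x : ℝ → Fin N → EuclideanSpace ℝ (Fin d))
    (y : ℝ → Fin N → EuclideanSpace ℝ (Fin k))
    (ε α β L L' L'' : ℝ)
    (hε : 0 < ε) (hα : 0 < α) (hβ : 0 < β)
    (hLpos : 0 < L) (hL'pos : 0 < L') (hL''pos : 0 < L'')
    -- the dynamical systems
    (hx : ∀ t ∈ Icc (0 : ℝ) T, ∀ i, HasDerivAt (fun s => x s i)
      (f i (adjMat (x t)) + ∑ j, F i j (adjMat (x t)) • x t j) t)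
    (hy0 : ∀ i, y 0 i = M (x 0 i))
    (hy : ∀ t ∈ Icc (0 : ℝ) T, ∀ i, HasDerivAt (fun s => y s i)
      (M (f i (adjMat (y t))) + ∑ j, F i j (adjMat (y t)) • y t j) t)
    -- (a) Lipschitz/boundedness conditions
    (hfLip : ∀ i a b, ‖f i a - f i b‖ ≤ L * matSup (a - b))
    (hFbd : ∀ i a, ∑ j, |F i j a| ≤ L')
    (hFLip : ∀ i a b, ∑ j, |F i j a - F i j b| ≤ L'' * matSup (a - b))
    -- (b) a priori bound on mutual distances
    (hbd : ∀ t ∈ Icc (0 : ℝ) T, ∀ i j, ‖x t i - x t j‖ ≤ α)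
    -- (c) quasi-isometry of M along the trajectories
    (hM : ∀ t ∈ Icc (0 : ℝ) T, ∀ i j,
      (1 - ε) * ‖x t i - x t j‖ ≤ ‖M (x t i) - M (x t j)‖ ∧
      ‖M (x t i) - M (x t j)‖ ≤ (1 + ε) * ‖x t i - x t j‖)
    -- (d) a priori bound on the projected trajectories
    (hybd : ∀ t ∈ Icc (0 : ℝ) T, ∀ i, ‖y t i‖ ≤ β) :
    ∀ t ∈ Icc (0 : ℝ) T, (⨆ i, ‖y t i - M (x t i)‖) ≤
      ε * α * t * (L * ‖M‖ + L'' * β) *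
        Real.exp ((2 * L * ‖M‖ + 2 * β * L'' + L') * t) :=
  stmt_14_general T f F M x y ε α β L L' L'' hε hα hβ hLpos hL'pos hL''pos hx hy0 hy hfLip hFbd
    hFLip hbd hM hybd

end
end

section
/- For the second-order system with self-propulsion and pairwise interaction, ẋ_i = v_i, v̇_i = (a - b‖v_i‖₂²)v_i - (1/N)Σ_{j≠i} u(‖x_i-x_j‖₂)(x_i - x_j), where u is bounded Lipschitz and a, b > 0, if max_i ‖v_i‖₂ ≤ β_v and max_i ‖x_i‖₂ ≤ β_x, then for all i, j: ‖ẋ_i - ẋ_j‖₂ + ‖v̇_i - v̇_j‖₂ ≤ (1 + a + 3b·β_v²)·‖v_i - v_j‖₂ + (‖u‖_∞ + 2β_x·‖u‖_Lip)·‖x_i - x_j‖₂. -/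
/-!
Both components of the right-hand side are Lipschitz on the bounded region. For the
self-propulsion `(a - b‖v‖²) v` this follows from
`‖p‖² p - ‖q‖² q = ‖p‖² (p - q) + (‖p‖ + ‖q‖)(‖p‖ - ‖q‖) q`. For the interaction, the
`k = i` term of the sum vanishes, so both sums may be taken over all particles; each
difference `u(‖xᵢ - xₖ‖)(xᵢ - xₖ) - u(‖xⱼ - xₖ‖)(xⱼ - xₖ)` is at most
`(‖u‖_∞ + 2 βₓ ‖u‖_Lip) ‖xᵢ - xⱼ‖`, and the factor `1/N` averages these `N` bounds.
-/

section Lipschitz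

variable {E : Type*} [NormedAddCommGroup E] [NormedSpace ℝ E]

lemma norm_sq_smul_sub_norm_sq_smul_le {β : ℝ} {p q : E} (hp : ‖p‖ ≤ β) (hq : ‖q‖ ≤ β) :
    ‖‖p‖ ^ 2 • p - ‖q‖ ^ 2 • q‖ ≤ 3 * β ^ 2 * ‖p - q‖ := by
  have hβ : 0 ≤ β := (norm_nonneg p).trans hp
  have hsq : |‖p‖ ^ 2 - ‖q‖ ^ 2| ≤ 2 * β * ‖p - q‖ := by
    rw [show ‖p‖ ^ 2 - ‖q‖ ^ 2 = (‖p‖ + ‖q‖) * (‖p‖ - ‖q‖) by ring, abs_mul,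
      abs_of_nonneg (by positivity)]
    exact mul_le_mul (by linarith) (abs_norm_sub_norm_le p q) (abs_nonneg _) (by positivity)
  have hp2 : ‖p‖ ^ 2 ≤ β ^ 2 := pow_le_pow_left₀ (norm_nonneg p) hp 2
  calc ‖‖p‖ ^ 2 • p - ‖q‖ ^ 2 • q‖
      = ‖‖p‖ ^ 2 • (p - q) + (‖p‖ ^ 2 - ‖q‖ ^ 2) • q‖ := by congr 1; module
    _ ≤ ‖p‖ ^ 2 * ‖p - q‖ + |‖p‖ ^ 2 - ‖q‖ ^ 2| * ‖q‖ := by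
        refine (norm_add_le _ _).trans_eq ?_
        rw [norm_smul, norm_smul, Real.norm_eq_abs, Real.norm_eq_abs, abs_of_nonneg (by positivity)]
    _ ≤ β ^ 2 * ‖p - q‖ + (2 * β * ‖p - q‖) * β := by
        gcongr
    _ = 3 * β ^ 2 * ‖p - q‖ := by ring

lemma norm_selfPropulsion_sub_le {a b β : ℝ} (ha : 0 ≤ a) (hb : 0 ≤ b) {p q : E}
    (hp : ‖p‖ ≤ β) (hq : ‖q‖ ≤ β) :
    ‖(a - b * ‖p‖ ^ 2) • p - (a - b * ‖q‖ ^ 2) • q‖ ≤ (a + 3 * b * β ^ 2) * ‖p - q‖ :=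
  calc ‖(a - b * ‖p‖ ^ 2) • p - (a - b * ‖q‖ ^ 2) • q‖
      = ‖a • (p - q) - b • (‖p‖ ^ 2 • p - ‖q‖ ^ 2 • q)‖ := by congr 1; module
    _ ≤ a * ‖p - q‖ + b * (3 * β ^ 2 * ‖p - q‖) := by
        refine (norm_sub_le _ _).trans ?_
        rw [norm_smul, norm_smul, Real.norm_of_nonneg ha, Real.norm_of_nonneg hb]
        gcongr
        exact norm_sq_smul_sub_norm_sq_smul_le hp hq
    _ = (a + 3 * b * β ^ 2) * ‖p - q‖ := by ring

lemma norm_interaction_sub_le_s16 {u : ℝ → ℝ} {L M β : ℝ}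
    (hL : ∀ s t, |u s - u t| ≤ L * |s - t|) (hM : ∀ s, |u s| ≤ M)
    {p q r : E} (hq : ‖q‖ ≤ β) (hr : ‖r‖ ≤ β) :
    ‖u ‖p - r‖ • (p - r) - u ‖q - r‖ • (q - r)‖ ≤ (M + 2 * β * L) * ‖p - q‖ := by
  have hL0 : 0 ≤ L := by simpa using (abs_nonneg _).trans (hL 1 0)
  have hu : |u ‖p - r‖ - u ‖q - r‖| ≤ L * ‖p - q‖ :=
    calc |u ‖p - r‖ - u ‖q - r‖| ≤ L * |‖p - r‖ - ‖q - r‖| := hL _ _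
      _ ≤ L * ‖p - q‖ := by
          gcongr
          simpa using abs_norm_sub_norm_le (p - r) (q - r)
  have hqr : ‖q - r‖ ≤ 2 * β := (norm_sub_le q r).trans (by linarith)
  calc ‖u ‖p - r‖ • (p - r) - u ‖q - r‖ • (q - r)‖
      = ‖u ‖p - r‖ • (p - q) + (u ‖p - r‖ - u ‖q - r‖) • (q - r)‖ := by congr 1; module
    _ ≤ |u ‖p - r‖| * ‖p - q‖ + |u ‖p - r‖ - u ‖q - r‖| * ‖q - r‖ := by
        refine (norm_add_le _ _).trans_eq ?_
        rw [norm_smul, norm_smul, Real.norm_eq_abs, Real.norm_eq_abs]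
    _ ≤ M * ‖p - q‖ + (L * ‖p - q‖) * (2 * β) := by
        gcongr
        exact hM _
    _ = (M + 2 * β * L) * ‖p - q‖ := by ring

end Lipschitz

lemma norm_average_le {ι E : Type*} [Fintype ι] [Nonempty ι] [SeminormedAddCommGroup E]
    [NormedSpace ℝ E] {f : ι → E} {C : ℝ} (hf : ∀ k, ‖f k‖ ≤ C) :
    ‖(1 / (Fintype.card ι : ℝ)) • ∑ k, f k‖ ≤ C := by
  have hcard : (0 : ℝ) < Fintype.card ι := by exact_mod_cast Fintype.card_pos
  rw [norm_smul, Real.norm_of_nonneg (by positivity), one_div_mul_eq_div,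
    div_le_iff₀ hcard, mul_comm]
  simpa using norm_sum_le_of_le Finset.univ fun k _ => hf k

theorem stmt_16 {N d : ℕ}
    (x v : Fin N → EuclideanSpace ℝ (Fin d))
    (a b : ℝ) (ha : 0 < a) (hb : 0 < b)
    (u : ℝ → ℝ) (uLip uInf : ℝ)
    (huLip : ∀ s t, |u s - u t| ≤ uLip * |s - t|)
    (huInf : ∀ s, |u s| ≤ uInf)
    (βv βx : ℝ)
    (hβv : ∀ i, ‖v i‖ ≤ βv) (hβx : ∀ i, ‖x i‖ ≤ βx)
    (xdot vdot : Fin N → EuclideanSpace ℝ (Fin d))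
    (hxdot : ∀ i, xdot i = v i)
    (hvdot : ∀ i, vdot i = (a - b * ‖v i‖ ^ 2) • v i -
      (1 / (N : ℝ)) • ∑ j ∈ Finset.univ.erase i, u ‖x i - x j‖ • (x i - x j)) :
    ∀ i j, ‖xdot i - xdot j‖ + ‖vdot i - vdot j‖ ≤
      (1 + a + 3 * b * βv ^ 2) * ‖v i - v j‖ +
      (uInf + 2 * βx * uLip) * ‖x i - x j‖ := by
  intro i j
  have : Nonempty (Fin N) := ⟨i⟩
  have hsum (i : Fin N) : ∑ k ∈ Finset.univ.erase i, u ‖x i - x k‖ • (x i - x k) =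
      ∑ k, u ‖x i - x k‖ • (x i - x k) :=
    Finset.sum_erase _ (by simp)
  have hvdot_sub : vdot i - vdot j =
      ((a - b * ‖v i‖ ^ 2) • v i - (a - b * ‖v j‖ ^ 2) • v j) -
      (1 / (Fintype.card (Fin N) : ℝ)) •
        ∑ k, (u ‖x i - x k‖ • (x i - x k) - u ‖x j - x k‖ • (x j - x k)) := by
    rw [hvdot, hvdot, hsum, hsum, Finset.sum_sub_distrib, Fintype.card_fin, smul_sub]
    abel
  rw [hxdot, hxdot, hvdot_sub]
  refine (add_le_add le_rfl (norm_sub_le _ _)).trans ?_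
  linarith [norm_selfPropulsion_sub_le ha.le hb.le (hβv i) (hβv j),
    norm_average_le fun k => norm_interaction_sub_le_s16 huLip huInf (p := x i) (hβx j) (hβx k)]
end
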